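/- arXiv:1803.01267 — 8 statements merged into one kernel-verified Lean document; each statement's English description precedes it below -/
import Mathlib

section
/- Let n ≥ 1 and let v, w : Fin n → ℍ satisfy ∑ i, star (v i) * v i = 1 and ∑ i, star (w i) * w i = 1. Then there exists M ∈ Matrix.unitaryGroup (Fin n) ℍ with M.mulVec v = w. -/
open Quaternion

/-- Quaternionic Householder reflection. -/
lemma householder_aux (n : ℕ) (x y : Fin n → ℍ[ℝ]) (r : ℝ)
    (hq : ∑ i, star (x i) * y i = (r : ℍ[ℝ]))
    (hxx : ∑ i, star (x i) * x i = 1) (hyy : ∑ i, star (y i) * y i = 1)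
    (hne : x ≠ y) :
    ∃ M ∈ unitary (Matrix (Fin n) (Fin n) ℍ[ℝ]), M.mulVec x = y := by
  set d : Fin n → ℍ[ℝ] := x - y with hd
  set s : ℝ := ∑ i, normSq (d i) with hs
  have hds : ∑ i, star (d i) * d i = (s : ℍ[ℝ]) := by
    rw [hs]
    rw [show ((↑(∑ i, normSq (d i)) : ℍ[ℝ])) = ∑ i, (((normSq (d i) : ℝ)) : ℍ[ℝ]) by
      exact map_sum (algebraMap ℝ ℍ[ℝ]) (fun i => normSq (d i)) Finset.univ]
    exact Finset.sum_congr rfl fun i _ => Quaternion.star_mul_self (d i)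
  have hyx : ∑ i, star (y i) * x i = (r : ℍ[ℝ]) := by
    have h1 : star (∑ i, star (x i) * y i) = ∑ i, star (y i) * x i := by
      rw [star_sum]; exact Finset.sum_congr rfl fun i _ => by rw [star_mul, star_star]
    rw [← h1, hq, Quaternion.star_coe]
  have hsum : s = 2 - 2 * r := by
    have key : (s : ℍ[ℝ]) = ((2 - 2 * r : ℝ) : ℍ[ℝ]) := by
      rw [← hds]
      have h2 : ∀ i, star (d i) * d i
          = star (x i) * x i - star (x i) * y i - star (y i) * x i + star (y i) * y i := by
        intro i
        simp only [hd, Pi.sub_apply, star_sub]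
        noncomm_ring
      rw [Finset.sum_congr rfl fun i _ => h2 i]
      simp only [Finset.sum_add_distrib, Finset.sum_sub_distrib, hxx, hyy, hq, hyx]
      rw [← Quaternion.coe_one, ← Quaternion.coe_sub, ← Quaternion.coe_sub,
        ← Quaternion.coe_add]
      exact congrArg (fun t : ℝ => (t : ℍ[ℝ])) (by ring)
    exact Quaternion.coe_injective key
  have hs0 : 0 < s := by
    have hne' : ∃ i, d i ≠ 0 := by
      by_contra h; push_neg at h
      exact hne (funext fun i => sub_eq_zero.mp (h i))
    obtain ⟨i, hi⟩ := hne'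
    refine Finset.sum_pos' (fun j _ => normSq_nonneg) ⟨i, Finset.mem_univ i, ?_⟩
    exact lt_of_le_of_ne normSq_nonneg fun h => hi (normSq_eq_zero.mp h.symm)
  set c : ℝ := 2 / s with hc
  set A : Matrix (Fin n) (Fin n) ℍ[ℝ] := Matrix.of fun i j => c • (d i * star (d j)) with hA
  set M : Matrix (Fin n) (Fin n) ℍ[ℝ] := 1 - A with hM
  have hAH : star A = A := by
    refine Matrix.ext fun i j => ?_
    simp only [Matrix.star_apply, hA, Matrix.of_apply]
    rw [Quaternion.star_smul, star_mul, star_star]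
  have hMH : star M = M := by
    rw [hM, star_sub, star_one, hAH]
  have hAA : A * A = A + A := by
    refine Matrix.ext fun i k => ?_
    simp only [Matrix.mul_apply, hA, Matrix.of_apply, Matrix.add_apply]
    have h3 : ∀ j, c • (d i * star (d j)) * c • (d j * star (d k))
        = (c * c) • (d i * ((star (d j) * d j) * star (d k))) := by
      intro j
      rw [smul_mul_smul_comm]
      congr 1
      noncomm_ring
    rw [Finset.sum_congr rfl fun j _ => h3 j]
    have h4 : ∀ j, d i * ((star (d j) * d j) * star (d k))
        = d i * (star (d j) * d j) * star (d k) := fun j => (mul_assoc _ _ _).symm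
    simp only [h4]
    rw [← Finset.smul_sum, ← Finset.sum_mul, ← Finset.mul_sum, hds,
      Quaternion.mul_coe_eq_smul, smul_mul_assoc, smul_smul, ← add_smul]
    congr 1
    rw [hc]
    field_simp
    ring
  have hMM : M * M = 1 := by
    rw [hM, sub_mul, one_mul, mul_sub, mul_one, hAA]
    abel
  refine ⟨M, Unitary.mem_iff.mpr ⟨by rw [hMH, hMM], by rw [hMH, hMM]⟩, ?_⟩
  have hdx : ∑ j, star (d j) * x j = ((s / 2 : ℝ) : ℍ[ℝ]) := by
    have h5 : ∀ j, star (d j) * x j = star (x j) * x j - star (y j) * x j := by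
      intro j; simp only [hd, Pi.sub_apply, star_sub, sub_mul]
    rw [Finset.sum_congr rfl fun j _ => h5 j, Finset.sum_sub_distrib, hxx, hyx, hsum]
    rw [← Quaternion.coe_one, ← Quaternion.coe_sub]
    exact congrArg (fun t : ℝ => (t : ℍ[ℝ])) (by ring)
  have hAx : A.mulVec x = d := by
    funext i
    simp only [Matrix.mulVec, dotProduct, hA, Matrix.of_apply]
    have h6 : ∀ j, c • (d i * star (d j)) * x j = c • (d i * (star (d j) * x j)) := by
      intro j; rw [smul_mul_assoc, mul_assoc]
    rw [Finset.sum_congr rfl fun j _ => h6 j, ← Finset.smul_sum, ← Finset.mul_sum, hdx,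
      Quaternion.mul_coe_eq_smul, smul_smul]
    rw [show c * (s / 2) = 1 by rw [hc]; field_simp]
    exact one_smul _ _
  rw [hM, Matrix.sub_mulVec, Matrix.one_mulVec, hAx]
  simp [hd]

/-- Every unit vector is the image of the first standard basis vector under some unitary. -/
lemma column_aux (n : ℕ) (hn : 1 ≤ n) (v : Fin n → ℍ[ℝ])
    (hv : ∑ i, star (v i) * v i = 1) :
    ∃ M ∈ unitary (Matrix (Fin n) (Fin n) ℍ[ℝ]),
      M.mulVec (Pi.single (⟨0, hn⟩ : Fin n) 1) = v := by
  classical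
  set z : Fin n := ⟨0, hn⟩ with hz
  have sum_single : ∀ (u : ℍ[ℝ]) (f : Fin n → ℍ[ℝ]),
      ∑ i, star ((Pi.single z u : Fin n → ℍ[ℝ]) i) * f i = star u * f z := by
    intro u f
    rw [Finset.sum_eq_single z]
    · rw [Pi.single_eq_same]
    · intro b _ hb; rw [Pi.single_eq_of_ne hb, star_zero, zero_mul]
    · intro h; exact absurd (Finset.mem_univ z) h
  set q : ℍ[ℝ] := v z with hqdef
  set u : ℍ[ℝ] := if q = 0 then 1 else (‖q‖⁻¹ : ℝ) • q with hu
  set ru : ℝ := if q = 0 then 0 else ‖q‖ with hru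
  have hnormq : star q * q = ((‖q‖ * ‖q‖ : ℝ) : ℍ[ℝ]) := by
    rw [Quaternion.star_mul_self, ← Quaternion.normSq_eq_norm_mul_self]
  have huu : star u * u = 1 := by
    rw [hu]
    by_cases h : q = 0
    · simp [h]
    · simp only [h, if_false, Quaternion.star_smul, smul_mul_smul_comm, hnormq]
      rw [Quaternion.smul_coe, ← Quaternion.coe_one]
      congr 1
      have h0 : ‖q‖ ≠ 0 := norm_ne_zero_iff.mpr h
      field_simp
  have hqu : star u * q = (ru : ℍ[ℝ]) := by
    rw [hu, hru]
    by_cases h : q = 0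
    · simp [h]
    · simp only [h, if_false, Quaternion.star_smul, smul_mul_assoc, hnormq]
      rw [Quaternion.smul_coe]
      congr 1
      have h0 : ‖q‖ ≠ 0 := norm_ne_zero_iff.mpr h
      field_simp
  set x : Fin n → ℍ[ℝ] := Pi.single z u with hx
  have hxx : ∑ i, star (x i) * x i = 1 := by
    rw [hx, sum_single, Pi.single_eq_same, huu]
  have hq' : ∑ i, star (x i) * v i = (ru : ℍ[ℝ]) := by
    rw [hx, sum_single, ← hqdef, hqu]
  set D : Matrix (Fin n) (Fin n) ℍ[ℝ] := Matrix.diagonal (fun i => if i = z then u else 1)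
    with hD
  have huu' : u * star u = 1 := by rw [← star_comm_self', huu]
  have hDmem : D ∈ unitary (Matrix (Fin n) (Fin n) ℍ[ℝ]) := by
    constructor <;>
    · refine Matrix.ext fun i j => ?_
      rw [hD, Matrix.star_eq_conjTranspose, Matrix.diagonal_conjTranspose,
        Matrix.diagonal_mul_diagonal]
      rcases eq_or_ne i j with rfl | hij
      · rw [Matrix.diagonal_apply_eq, Matrix.one_apply_eq]
        by_cases h : i = z <;> simp [h, huu, huu']
      · rw [Matrix.diagonal_apply_ne _ hij, Matrix.one_apply_ne hij]
  have hDe : D.mulVec (Pi.single z 1) = x := by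
    funext i
    rw [hD, Matrix.mulVec_single, hx]
    by_cases h : i = z
    · subst h; simp
    · simp [Matrix.diagonal_apply_ne _ h, h, Pi.single_eq_of_ne h]
  by_cases hxv : x = v
  · exact ⟨D, hDmem, by rw [hDe, hxv]⟩
  · obtain ⟨H, hHmem, hH⟩ := householder_aux n x v ru hq' hxx hv hxv
    refine ⟨H * D, mul_mem hHmem hDmem, ?_⟩
    rw [← Matrix.mulVec_mulVec, hDe, hH]

open Quaternion

/-- The compact symplectic group `Sp(n)`, the group of `n × n` quaternionic matrices `M` with
`star Mᵀ * M = 1`, acts transitively on the unit sphere `S^{4n-1} ⊆ ℍⁿ`. -/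
theorem sp_transitive_on_sphere (n : ℕ) (hn : 1 ≤ n) (v w : Fin n → ℍ[ℝ])
    (hv : ∑ i, star (v i) * v i = 1) (hw : ∑ i, star (w i) * w i = 1) :
    ∃ M ∈ unitary (Matrix (Fin n) (Fin n) ℍ[ℝ]), M.mulVec v = w := by
  obtain ⟨Mv, hMv, hMve⟩ := column_aux n hn v hv
  obtain ⟨Mw, hMw, hMwe⟩ := column_aux n hn w hw
  refine ⟨Mw * star Mv, mul_mem hMw (Unitary.star_mem hMv), ?_⟩
  rw [← hMve, Matrix.mulVec_mulVec, mul_assoc, hMv.1, mul_one, hMwe]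
end

section
/- Let n ≥ 1 and let e₀ = Pi.single 0 1 : Fin n → ℍ be the first standard basis vector. Then the stabilizer subgroup {M ∈ Matrix.unitaryGroup (Fin n) ℍ // M.mulVec e₀ = e₀} is isomorphic, as a group, to Matrix.unitaryGroup (Fin (n−1)) ℍ. -/
open Quaternion

set_option maxHeartbeats 1000000

open Matrix

section aux
variable {m : ℕ}

noncomputable def qBlock (M : Matrix (Fin (m+1)) (Fin (m+1)) ℍ[ℝ]) :
    Matrix (Fin m) (Fin m) ℍ[ℝ] := Matrix.of fun i j => M i.succ j.succ

@[simp] lemma qBlock_apply (M : Matrix (Fin (m+1)) (Fin (m+1)) ℍ[ℝ]) (i j : Fin m) :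
    qBlock M i j = M i.succ j.succ := rfl

noncomputable def qEmb (B : Matrix (Fin m) (Fin m) ℍ[ℝ]) :
    Matrix (Fin (m+1)) (Fin (m+1)) ℍ[ℝ] :=
  Matrix.of (Fin.cons (Pi.single 0 1) (fun i => Fin.cons 0 (B i)))

@[simp] lemma qEmb_zero_zero (B : Matrix (Fin m) (Fin m) ℍ[ℝ]) : qEmb B 0 0 = 1 := by
  simp [qEmb]
@[simp] lemma qEmb_zero_succ (B : Matrix (Fin m) (Fin m) ℍ[ℝ]) (j : Fin m) :
    qEmb B 0 j.succ = 0 := by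
  simp [qEmb, Pi.single_eq_of_ne (Fin.succ_ne_zero j)]
@[simp] lemma qEmb_succ_zero (B : Matrix (Fin m) (Fin m) ℍ[ℝ]) (i : Fin m) :
    qEmb B i.succ 0 = 0 := by simp [qEmb]
@[simp] lemma qEmb_succ_succ (B : Matrix (Fin m) (Fin m) ℍ[ℝ]) (i j : Fin m) :
    qEmb B i.succ j.succ = B i j := by simp [qEmb]

lemma stab_col {M : Matrix (Fin (m+1)) (Fin (m+1)) ℍ[ℝ]}
    (hs : M *ᵥ Pi.single 0 1 = Pi.single 0 1) (i : Fin (m+1)) :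
    M i 0 = (Pi.single 0 1 : Fin (m+1) → ℍ[ℝ]) i := by
  have := congrFun hs i
  simpa [Matrix.mulVec_single] using this

lemma star_stab {M : Matrix (Fin (m+1)) (Fin (m+1)) ℍ[ℝ]}
    (hU : M ∈ unitary (Matrix (Fin (m+1)) (Fin (m+1)) ℍ[ℝ]))
    (hs : M *ᵥ Pi.single 0 1 = Pi.single 0 1) :
    star M *ᵥ Pi.single 0 1 = Pi.single 0 1 := by
  conv_lhs => rw [← hs]
  rw [Matrix.mulVec_mulVec, (Unitary.mem_iff.mp hU).1, Matrix.one_mulVec]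

lemma stab_row {M : Matrix (Fin (m+1)) (Fin (m+1)) ℍ[ℝ]}
    (hU : M ∈ unitary (Matrix (Fin (m+1)) (Fin (m+1)) ℍ[ℝ]))
    (hs : M *ᵥ Pi.single 0 1 = Pi.single 0 1) (j : Fin (m+1)) :
    M 0 j = (Pi.single 0 1 : Fin (m+1) → ℍ[ℝ]) j := by
  have h := stab_col (star_stab hU hs) j
  rw [Matrix.star_apply] at h
  have := congrArg star h
  rw [star_star] at this
  rw [this]
  simp [Pi.single_apply, apply_ite (star : ℍ[ℝ] → ℍ[ℝ])]

lemma qBlock_unitary {M : Matrix (Fin (m+1)) (Fin (m+1)) ℍ[ℝ]}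
    (hU : M ∈ unitary (Matrix (Fin (m+1)) (Fin (m+1)) ℍ[ℝ]))
    (hs : M *ᵥ Pi.single 0 1 = Pi.single 0 1) :
    qBlock M ∈ unitary (Matrix (Fin m) (Fin m) ℍ[ℝ]) := by
  obtain ⟨h1, h2⟩ := Unitary.mem_iff.mp hU
  constructor
  · refine Matrix.ext fun i j => ?_
    have := congrFun (congrFun h1 i.succ) j.succ
    rw [Matrix.mul_apply, Fin.sum_univ_succ] at this
    rw [Matrix.star_apply, stab_row hU hs i.succ,
      Pi.single_eq_of_ne (Fin.succ_ne_zero i), star_zero, zero_mul, zero_add] at this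
    simp only [Matrix.star_apply] at this
    rw [Matrix.mul_apply]
    simp only [Matrix.star_apply, qBlock_apply]
    rw [this, Matrix.one_apply, Matrix.one_apply]
    simp [Fin.succ_inj]
  · refine Matrix.ext fun i j => ?_
    have := congrFun (congrFun h2 i.succ) j.succ
    rw [Matrix.mul_apply, Fin.sum_univ_succ] at this
    rw [stab_col hs i.succ,
      Pi.single_eq_of_ne (Fin.succ_ne_zero i), zero_mul, zero_add] at this
    simp only [Matrix.star_apply] at this
    rw [Matrix.mul_apply]
    simp only [Matrix.star_apply, qBlock_apply]
    rw [this, Matrix.one_apply, Matrix.one_apply]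
    simp [Fin.succ_inj]

lemma qEmb_stab (B : Matrix (Fin m) (Fin m) ℍ[ℝ]) :
    qEmb B *ᵥ Pi.single 0 1 = Pi.single 0 1 := by
  funext i
  rw [Matrix.mulVec_single]
  induction i using Fin.cases with
  | zero => simp
  | succ i => simp [Pi.single_eq_of_ne (Fin.succ_ne_zero i)]

lemma qEmb_unitary {B : Matrix (Fin m) (Fin m) ℍ[ℝ]}
    (hB : B ∈ unitary (Matrix (Fin m) (Fin m) ℍ[ℝ])) :
    qEmb B ∈ unitary (Matrix (Fin (m+1)) (Fin (m+1)) ℍ[ℝ]) := by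
  obtain ⟨h1, h2⟩ := Unitary.mem_iff.mp hB
  constructor
  · refine Matrix.ext fun i j => ?_
    rw [Matrix.mul_apply, Fin.sum_univ_succ]
    induction i using Fin.cases with
    | zero =>
      induction j using Fin.cases with
      | zero => simp [Matrix.star_apply, Matrix.one_apply]
      | succ j => simp [Matrix.star_apply, Matrix.one_apply, Fin.succ_ne_zero j, (Fin.succ_ne_zero j).symm]
    | succ i =>
      induction j using Fin.cases with
      | zero => simp [Matrix.star_apply, Matrix.one_apply, Fin.succ_ne_zero i]
      | succ j =>
        have := congrFun (congrFun h1 i) j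
        rw [Matrix.mul_apply] at this
        simp only [Matrix.star_apply] at this
        simp only [Matrix.star_apply, qEmb_succ_succ, qEmb_zero_succ, star_zero, zero_mul,
          zero_add]
        rw [this, Matrix.one_apply, Matrix.one_apply]
        simp [Fin.succ_inj]
  · refine Matrix.ext fun i j => ?_
    rw [Matrix.mul_apply, Fin.sum_univ_succ]
    induction i using Fin.cases with
    | zero =>
      induction j using Fin.cases with
      | zero => simp [Matrix.star_apply, Matrix.one_apply]
      | succ j => simp [Matrix.star_apply, Matrix.one_apply, Fin.succ_ne_zero j, (Fin.succ_ne_zero j).symm]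
    | succ i =>
      induction j using Fin.cases with
      | zero => simp [Matrix.star_apply, Matrix.one_apply, Fin.succ_ne_zero i]
      | succ j =>
        have := congrFun (congrFun h2 i) j
        rw [Matrix.mul_apply] at this
        simp only [Matrix.star_apply] at this
        simp only [Matrix.star_apply, qEmb_succ_succ, qEmb_succ_zero, star_zero, mul_zero,
          zero_add]
        rw [this, Matrix.one_apply, Matrix.one_apply]
        simp [Fin.succ_inj]

lemma qBlock_qEmb (B : Matrix (Fin m) (Fin m) ℍ[ℝ]) : qBlock (qEmb B) = B := by
  refine Matrix.ext fun i j => ?_; simp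

lemma qEmb_qBlock {M : Matrix (Fin (m+1)) (Fin (m+1)) ℍ[ℝ]}
    (hU : M ∈ unitary (Matrix (Fin (m+1)) (Fin (m+1)) ℍ[ℝ]))
    (hs : M *ᵥ Pi.single 0 1 = Pi.single 0 1) : qEmb (qBlock M) = M := by
  refine Matrix.ext fun i j => ?_
  induction i using Fin.cases with
  | zero =>
    induction j using Fin.cases with
    | zero => simp [stab_row hU hs 0]
    | succ j => simp [stab_row hU hs j.succ, Pi.single_eq_of_ne (Fin.succ_ne_zero j)]
  | succ i =>
    induction j using Fin.cases with
    | zero => simp [stab_col hs i.succ, Pi.single_eq_of_ne (Fin.succ_ne_zero i)]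
    | succ j => simp

lemma qBlock_mul {M N : Matrix (Fin (m+1)) (Fin (m+1)) ℍ[ℝ]}
    (hrowN : ∀ j, N 0 j = (Pi.single 0 1 : Fin (m+1) → ℍ[ℝ]) j) :
    qBlock (M * N) = qBlock M * qBlock N := by
  refine Matrix.ext fun i j => ?_
  rw [qBlock_apply, Matrix.mul_apply, Matrix.mul_apply, Fin.sum_univ_succ,
    hrowN j.succ, Pi.single_eq_of_ne (Fin.succ_ne_zero j), mul_zero, zero_add]
  rfl

end aux


/-- The stabilizer subgroup of a vector `e` in the quaternionic unitary group
(the compact symplectic group `Sp(n)`, i.e. the group of `n × n` quaternionic matrices `M`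
with `star Mᵀ * M = 1`). -/
noncomputable def spStabilizer (n : ℕ) (e : Fin n → ℍ[ℝ]) :
    Subgroup (unitary (Matrix (Fin n) (Fin n) ℍ[ℝ])) where
  carrier := {M | M.val.mulVec e = e}
  one_mem' := by
    show (1 : Matrix (Fin n) (Fin n) ℍ[ℝ]).mulVec e = e
    rw [Matrix.one_mulVec]
  mul_mem' := by
    intro A B hA hB
    show (A.val * B.val).mulVec e = e
    rw [← Matrix.mulVec_mulVec, hB, hA]
  inv_mem' := by
    intro A hA
    have hA' : A.val.mulVec e = e := hA
    show (A⁻¹).val.mulVec e = e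
    have h1 : (A⁻¹).val * A.val = 1 := by
      have := congrArg Subtype.val (inv_mul_cancel A)
      exact this
    calc (A⁻¹).val.mulVec e = (A⁻¹).val.mulVec (A.val.mulVec e) := by rw [hA']
      _ = ((A⁻¹).val * A.val).mulVec e := by rw [Matrix.mulVec_mulVec]
      _ = e := by rw [h1, Matrix.one_mulVec]

/-- The stabilizer of the first standard basis vector in `Sp(n)` is isomorphic, as a group,
to `Sp(n-1)`. -/
theorem spStabilizer_mulEquiv (n : ℕ) (hn : 1 ≤ n) :
    Nonempty ((spStabilizer n (Pi.single (⟨0, hn⟩ : Fin n) 1)) ≃*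
      unitary (Matrix (Fin (n - 1)) (Fin (n - 1)) ℍ[ℝ])) := by
  obtain ⟨m, rfl⟩ : ∃ m, n = m + 1 := ⟨n - 1, (Nat.succ_pred_eq_of_pos hn).symm⟩
  have h0 : (⟨0, hn⟩ : Fin (m+1)) = 0 := rfl
  rw [h0]
  have hstab : ∀ x : spStabilizer (m+1) (Pi.single (0 : Fin (m+1)) 1),
      x.1.1 *ᵥ Pi.single 0 1 = Pi.single 0 1 := fun x => x.2
  refine ⟨{
    toFun := fun x => ⟨qBlock x.1.1, qBlock_unitary x.1.2 (hstab x)⟩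
    invFun := fun B => ⟨⟨qEmb B.1, qEmb_unitary B.2⟩, qEmb_stab B.1⟩
    left_inv := fun x => Subtype.ext (Subtype.ext (qEmb_qBlock x.1.2 (hstab x)))
    right_inv := fun B => Subtype.ext (qBlock_qEmb B.1)
    map_mul' := fun x y => Subtype.ext (qBlock_mul (stab_row y.1.2 (hstab y))) }⟩
end

section
/- Let p ≥ 1 and q ≥ 0 be natural numbers, and let v, w : Fin (p+q) → ℍ satisfy ⟨v, v⟩_J = 1 and ⟨w, w⟩_J = 1. Then there exists a (p+q)×(p+q) quaternionic matrix M with (star Mᵀ) * J * M = J and M.mulVec v = w. -/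
open Quaternion Matrix

/-- The diagonal quaternionic matrix `J` of signature `(p, q)`. -/
noncomputable def Jpq (p q : ℕ) : Matrix (Fin (p + q)) (Fin (p + q)) ℍ[ℝ] :=
  Matrix.diagonal (fun i => if (i : ℕ) < p then 1 else -1)

/-- The quaternionic Hermitian form `⟨v, v⟩_J = ∑ i, star (v i) * (J.mulVec v) i`. -/
noncomputable def quatHermForm (p q : ℕ) (v : Fin (p + q) → ℍ[ℝ]) : ℍ[ℝ] :=
  ∑ i, star (v i) * ((Jpq p q).mulVec v) i

/-- The sign vector of the form. -/
noncomputable def eps (p : ℕ) {n : ℕ} (i : Fin n) : ℍ[ℝ] := if (i : ℕ) < p then 1 else -1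

/-- The associated sesquilinear form. -/
noncomputable def hermB (p : ℕ) {n : ℕ} (v w : Fin n → ℍ[ℝ]) : ℍ[ℝ] :=
  ∑ i, star (v i) * (eps p i * w i)

lemma star_eps (p : ℕ) {n : ℕ} (i : Fin n) : star (eps p i) = eps p i := by
  unfold eps; split_ifs <;> simp

lemma Jpq_eq (p q : ℕ) : Jpq p q = Matrix.diagonal (eps p) := rfl

lemma quatHermForm_eq (p q : ℕ) (v : Fin (p + q) → ℍ[ℝ]) :
    quatHermForm p q v = hermB p v v := by
  unfold quatHermForm hermB
  refine Finset.sum_congr rfl fun i _ => ?_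
  rw [Jpq_eq, Matrix.mulVec_diagonal]

lemma star_hermB (p : ℕ) {n : ℕ} (x y : Fin n → ℍ[ℝ]) :
    star (hermB p x y) = hermB p y x := by
  unfold hermB
  rw [star_sum]
  refine Finset.sum_congr rfl fun i _ => ?_
  rw [StarMul.star_mul, StarMul.star_mul, star_star, star_eps, mul_assoc]

lemma hermB_sub_left (p : ℕ) {n : ℕ} (x y z : Fin n → ℍ[ℝ]) :
    hermB p (x - y) z = hermB p x z - hermB p y z := by
  unfold hermB
  rw [← Finset.sum_sub_distrib]
  refine Finset.sum_congr rfl fun i _ => ?_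
  simp [sub_mul]

lemma hermB_sub_right (p : ℕ) {n : ℕ} (x y z : Fin n → ℍ[ℝ]) :
    hermB p x (y - z) = hermB p x y - hermB p x z := by
  unfold hermB
  rw [← Finset.sum_sub_distrib]
  refine Finset.sum_congr rfl fun i _ => ?_
  simp [mul_sub]

lemma hermB_neg_left (p : ℕ) {n : ℕ} (x y : Fin n → ℍ[ℝ]) :
    hermB p (-x) y = -hermB p x y := by
  unfold hermB
  rw [← Finset.sum_neg_distrib]
  refine Finset.sum_congr rfl fun i _ => ?_
  simp

lemma hermB_neg_right (p : ℕ) {n : ℕ} (x y : Fin n → ℍ[ℝ]) :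
    hermB p x (-y) = -hermB p x y := by
  unfold hermB
  rw [← Finset.sum_neg_distrib]
  refine Finset.sum_congr rfl fun i _ => ?_
  simp

/-- Key lemma: a quasi-reflection mapping `v` to `w` exists whenever
`⟨v,w⟩ + star ⟨v,w⟩ ≠ 2`. -/
lemma key (p q : ℕ) (v w : Fin (p + q) → ℍ[ℝ])
    (hv : hermB p v v = 1) (hw : hermB p w w = 1)
    (hb : hermB p v w + star (hermB p v w) ≠ 2) :
    ∃ M : Matrix (Fin (p + q)) (Fin (p + q)) ℍ[ℝ],
      Mᴴ * Jpq p q * M = Jpq p q ∧ M.mulVec v = w := by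
  set c : ℍ[ℝ] := hermB p v w with hc
  set d : ℍ[ℝ] := 1 - star c with hd
  have hds : d + star d = 2 - (c + star c) := by
    rw [hd, star_sub, star_one, star_star, show (2:ℍ[ℝ]) = 1 + 1 from by norm_num]; abel
  have hds0 : d + star d ≠ 0 := by
    rw [hds]
    intro h
    exact hb (sub_eq_zero.mp h).symm
  have hd0 : d ≠ 0 := by
    intro h
    rw [h] at hds0
    simp at hds0
  have hsd0 : star d ≠ 0 := star_ne_zero.mpr hd0
  set u : Fin (p + q) → ℍ[ℝ] := v - w with hu
  set μ : ℍ[ℝ] := -d⁻¹ with hμ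
  have hsμ : star μ = -(star d)⁻¹ := by rw [hμ, star_neg, star_inv₀]
  -- the values of the form on u
  have hwv : hermB p w v = star c := by rw [← star_hermB, ← hc]
  have huu : hermB p u u = d + star d := by
    rw [hu, hermB_sub_left, hermB_sub_right, hermB_sub_right, hv, hw, ← hc, hwv, hd,
      star_sub, star_one, star_star]
    abel
  have huv : hermB p u v = d := by
    rw [hu, hermB_sub_left, hv, hwv, hd]
  -- the key scalar identity
  have hkey : μ + star μ + star μ * (d + star d) * μ = 0 := by
    rw [hμ, hsμ]
    have h1 : (star d)⁻¹ * (d + star d) * d⁻¹ = (star d)⁻¹ + d⁻¹ := by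
      rw [mul_add, inv_mul_cancel₀ hsd0, add_mul, one_mul, mul_assoc, mul_inv_cancel₀ hd0,
        mul_one]
    calc -d⁻¹ + -(star d)⁻¹ + -(star d)⁻¹ * (d + star d) * -d⁻¹
        = -d⁻¹ + -(star d)⁻¹ + (star d)⁻¹ * (d + star d) * d⁻¹ := by noncomm_ring
      _ = 0 := by rw [h1]; abel
  -- the matrix
  set M : Matrix (Fin (p + q)) (Fin (p + q)) ℍ[ℝ] :=
    Matrix.of (fun i j => (if i = j then 1 else 0) + u i * μ * (star (u j) * eps p j))
    with hM
  have hMapp : ∀ i j, M i j = (if i = j then 1 else 0) + u i * μ * (star (u j) * eps p j) :=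
    fun i j => rfl
  have hMstar : ∀ k i, star (M k i) =
      (if k = i then 1 else 0) + eps p i * u i * star μ * star (u k) := by
    intro k i
    rw [hMapp, star_add, StarMul.star_mul, StarMul.star_mul, StarMul.star_mul, star_eps, star_star]
    have hite : star (if k = i then (1 : ℍ[ℝ]) else 0) = (if k = i then 1 else 0) := by
      split_ifs <;> simp
    rw [hite]
    noncomm_ring
  refine ⟨M, ?_, ?_⟩
  · -- isometry
    rw [Jpq_eq]
    refine Matrix.ext fun i j => ?_
    rw [Matrix.mul_apply]
    simp only [Matrix.mul_diagonal, Matrix.conjTranspose_apply]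
    rw [Matrix.diagonal_apply]
    have hterm : ∀ k, star (M k i) * eps p k * M k j =
        (if k = i then 1 else 0) * eps p k * (if k = j then 1 else 0)
        + (if k = i then 1 else 0) * (eps p k * (u k * μ * (star (u j) * eps p j)))
        + (eps p i * u i * star μ * star (u k)) * eps p k * (if k = j then 1 else 0)
        + (eps p i * u i * star μ) * (star (u k) * (eps p k * u k)) * (μ * (star (u j) * eps p j)) := by
      intro k
      rw [hMstar, hMapp]
      noncomm_ring
    rw [Finset.sum_congr rfl (fun k _ => hterm k)]
    rw [Finset.sum_add_distrib, Finset.sum_add_distrib, Finset.sum_add_distrib]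
    have hS1 : (∑ k, (if k = i then (1:ℍ[ℝ]) else 0) * eps p k * (if k = j then 1 else 0))
        = if i = j then eps p i else 0 := by
      rw [Finset.sum_eq_single_of_mem i (Finset.mem_univ i) (fun k _ hki => by simp [hki])]
      rw [if_pos rfl, one_mul]
      by_cases hij : i = j <;> simp [hij]
    have hS2 : (∑ k, (if k = i then (1:ℍ[ℝ]) else 0) * (eps p k * (u k * μ * (star (u j) * eps p j))))
        = eps p i * (u i * μ * (star (u j) * eps p j)) := by
      rw [Finset.sum_eq_single_of_mem i (Finset.mem_univ i) (fun k _ hki => by simp [hki])]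
      rw [if_pos rfl, one_mul]
    have hS3 : (∑ k, (eps p i * u i * star μ * star (u k)) * eps p k * (if k = j then (1:ℍ[ℝ]) else 0))
        = eps p i * u i * star μ * star (u j) * eps p j := by
      rw [Finset.sum_eq_single_of_mem j (Finset.mem_univ j) (fun k _ hkj => by simp [hkj])]
      rw [if_pos rfl, mul_one]
    have hS4 : (∑ k, (eps p i * u i * star μ) * (star (u k) * (eps p k * u k)) * (μ * (star (u j) * eps p j)))
        = (eps p i * u i * star μ) * (d + star d) * (μ * (star (u j) * eps p j)) := by
      rw [← Finset.sum_mul, ← Finset.mul_sum]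
      rw [show (∑ k, star (u k) * (eps p k * u k)) = hermB p u u from rfl, huu]
    rw [hS1, hS2, hS3, hS4]
    have hzero : eps p i * (u i * μ * (star (u j) * eps p j))
        + eps p i * u i * star μ * star (u j) * eps p j
        + (eps p i * u i * star μ) * (d + star d) * (μ * (star (u j) * eps p j))
        = eps p i * u i * (μ + star μ + star μ * (d + star d) * μ) * (star (u j) * eps p j) := by
      noncomm_ring
    rw [add_assoc, add_assoc, ← add_assoc (eps p i * (u i * μ * (star (u j) * eps p j))), hzero,
      hkey]
    simp
  · -- maps v to w
    funext i
    have : M.mulVec v i = ∑ j, M i j * v j := rfl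
    rw [this]
    have hterm : ∀ j, M i j * v j =
        (if i = j then 1 else 0) * v j + u i * μ * (star (u j) * (eps p j * v j)) := by
      intro j
      rw [hMapp]
      noncomm_ring
    rw [Finset.sum_congr rfl (fun j _ => hterm j), Finset.sum_add_distrib]
    have h1 : (∑ j, (if i = j then (1:ℍ[ℝ]) else 0) * v j) = v i := by
      rw [Finset.sum_eq_single_of_mem i (Finset.mem_univ i) (fun k _ hki => by simp [Ne.symm hki])]
      rw [if_pos rfl, one_mul]
    have h2 : (∑ j, u i * μ * (star (u j) * (eps p j * v j))) = u i * μ * d := by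
      rw [← Finset.mul_sum]
      rw [show (∑ j, star (u j) * (eps p j * v j)) = hermB p u v from rfl, huv]
    rw [h1, h2, hμ]
    have : u i = v i - w i := rfl
    calc v i + u i * -d⁻¹ * d = v i + -(u i * (d⁻¹ * d)) := by noncomm_ring
      _ = w i := by rw [inv_mul_cancel₀ hd0, mul_one, this]; abel

/-- The indefinite quaternionic unitary group `Sp(p,q)` acts transitively on the hyperboloid
`H_{4p,4q} = {v ∈ ℍ^{p+q} : ⟨v,v⟩_J = 1}` (Witt's theorem for quaternionic Hermitian forms). -/
theorem Sppq_transitive_on_hyperboloid (p q : ℕ) (hp : 1 ≤ p) (v w : Fin (p + q) → ℍ[ℝ])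
    (hv : quatHermForm p q v = 1) (hw : quatHermForm p q w = 1) :
    ∃ M : Matrix (Fin (p + q)) (Fin (p + q)) ℍ[ℝ],
      Mᴴ * Jpq p q * M = Jpq p q ∧ M.mulVec v = w := by
  rw [quatHermForm_eq] at hv hw
  by_cases h : hermB p v w + star (hermB p v w) = 2
  · -- go through -v
    have hnv : hermB p (-v) (-v) = 1 := by rw [hermB_neg_left, hermB_neg_right, hv]; norm_num
    have h1 : hermB p v (-v) + star (hermB p v (-v)) ≠ 2 := by
      rw [hermB_neg_right, hv]
      intro hcon
      rw [star_neg, star_one] at hcon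
      have h2 := congrArg QuaternionAlgebra.re hcon
      simp [show (2:ℍ[ℝ]).re = 2 from rfl] at h2
      norm_num at h2
    have h2 : hermB p (-v) w + star (hermB p (-v) w) ≠ 2 := by
      rw [hermB_neg_left, star_neg]
      intro hcon
      have h3 : -(hermB p v w + star (hermB p v w)) = 2 := by rw [← hcon]; abel
      rw [h] at h3
      have h4 := congrArg QuaternionAlgebra.re h3
      simp [show (2:ℍ[ℝ]).re = 2 from rfl] at h4
      norm_num at h4
    obtain ⟨M1, hM1J, hM1v⟩ := key p q v (-v) hv hnv h1
    obtain ⟨M2, hM2J, hM2v⟩ := key p q (-v) w hnv hw h2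
    refine ⟨M2 * M1, ?_, ?_⟩
    · rw [Matrix.conjTranspose_mul]
      calc M1ᴴ * M2ᴴ * Jpq p q * (M2 * M1)
          = M1ᴴ * (M2ᴴ * Jpq p q * M2) * M1 := by
            simp only [Matrix.mul_assoc]
        _ = M1ᴴ * Jpq p q * M1 := by rw [hM2J]
        _ = Jpq p q := hM1J
    · rw [← Matrix.mulVec_mulVec, hM1v, hM2v]
  · obtain ⟨M, hMJ, hMv⟩ := key p q v w hv hw h
    exact ⟨M, hMJ, hMv⟩
end

section
/- Let p ≥ 1 and q ≥ 0 be natural numbers, and let v : Fin (p+q) → ℝ satisfy Q_{p,q}(v) = 1. Then the stabilizer subgroup of v in the group of linear automorphisms of Fin (p+q) → ℝ preserving Q_{p,q} is isomorphic, as a group, to the group of linear automorphisms of Fin ((p−1)+q) → ℝ preserving Q_{p−1,q}. -/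
/-- The standard quadratic form of signature `(p, q)` on `Fin (p+q) → ℝ`:
`Q_{p,q}(v) = ∑_{i < p} (v i)^2 − ∑_{i ≥ p} (v i)^2`. -/
def Qpq (p q : ℕ) (v : Fin (p + q) → ℝ) : ℝ :=
  (∑ i ∈ Finset.univ.filter (fun i : Fin (p + q) => (i : ℕ) < p), v i ^ 2) -
    ∑ i ∈ Finset.univ.filter (fun i : Fin (p + q) => p ≤ (i : ℕ)), v i ^ 2

/-- The indefinite orthogonal group `O(p,q)`: linear automorphisms of `Fin (p+q) → ℝ`
preserving the quadratic form `Q_{p,q}`. -/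
noncomputable def OpqGroup (p q : ℕ) : Subgroup ((Fin (p + q) → ℝ) ≃ₗ[ℝ] (Fin (p + q) → ℝ)) where
  carrier := {T | ∀ x, Qpq p q (T x) = Qpq p q x}
  one_mem' := fun _ => rfl
  mul_mem' := by
    intro T S hT hS x
    show Qpq p q (T (S x)) = Qpq p q x
    rw [hT, hS]
  inv_mem' := by
    intro T hT x
    have h := hT (T⁻¹ x)
    rw [show T ((T⁻¹ : (Fin (p + q) → ℝ) ≃ₗ[ℝ] (Fin (p + q) → ℝ)) x) = x from
      T.apply_symm_apply x] at h
    exact h.symm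

/-- The stabilizer subgroup of a vector `v` inside `O(p,q)`. -/
noncomputable def OpqStabilizer (p q : ℕ) (v : Fin (p + q) → ℝ) : Subgroup (OpqGroup p q) where
  carrier := {T | (T : (Fin (p + q) → ℝ) ≃ₗ[ℝ] (Fin (p + q) → ℝ)) v = v}
  one_mem' := rfl
  mul_mem' := by
    intro T S hT hS
    show ((T * S : OpqGroup p q) : (Fin (p + q) → ℝ) ≃ₗ[ℝ] (Fin (p + q) → ℝ)) v = v
    show ((T : (Fin (p + q) → ℝ) ≃ₗ[ℝ] _) ((S : (Fin (p + q) → ℝ) ≃ₗ[ℝ] _) v)) = v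
    rw [show ((S : (Fin (p + q) → ℝ) ≃ₗ[ℝ] _)) v = v from hS,
      show ((T : (Fin (p + q) → ℝ) ≃ₗ[ℝ] _)) v = v from hT]
  inv_mem' := by
    intro T hT
    show ((T : OpqGroup p q) : (Fin (p + q) → ℝ) ≃ₗ[ℝ] _).symm v = v
    rw [LinearEquiv.symm_apply_eq]
    exact (show ((T : OpqGroup p q) : (Fin (p + q) → ℝ) ≃ₗ[ℝ] _) v = v from hT).symm

/-!
Reflections `x ↦ x - (polar Q u x / Q u) • u` in anisotropic vectors `u` preserve `Q`, and
reflecting in `v - w` (or in `v + w` and then in `w`) maps `v` to any `w` with `Q w = Q v ≠ 0`.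
Hence some isometry identifies `(ℝ^{p+q}, Q_{p,q})` with `(ℝ × ℝ^{(p-1)+q}, a² + Q_{p-1,q}(y))`
and sends `v` to `(1, 0)`. An isometry `T` of the latter fixing `(1, 0)` has the form `id × S`:
comparing the values of the form at `T (0, y)` and at `T (1, y) = (1, 0) + T (0, y)` shows that
`T (0, y)` has first coordinate `0`. The map `T ↦ S` is the required isomorphism.
-/

open MulAction QuadraticMap

section IsometrySubgroup

variable (R : Type*) {M M₁ M₂ N : Type*} [Semiring R] [AddCommMonoid M] [Module R M]
  [AddCommMonoid M₁] [Module R M₁] [AddCommMonoid M₂] [Module R M₂]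

def isometrySubgroup (f : M → N) : Subgroup (M ≃ₗ[R] M) where
  carrier := {T | ∀ x, f (T x) = f x}
  one_mem' _ := rfl
  mul_mem' hT hS x := (hT _).trans (hS x)
  inv_mem' {T} hT x := by simpa using (hT (T.symm x)).symm

variable {R}

lemma mem_stabilizer_isometrySubgroup {f : M → N} {v : M} {T : isometrySubgroup R f} :
    T ∈ stabilizer (isometrySubgroup R f) v ↔ (T : M ≃ₗ[R] M) v = v :=
  Iff.rfl

variable {f₁ : M₁ → N} {f₂ : M₂ → N}

lemma map_symm_apply_of_map_apply (e : M₁ ≃ₗ[R] M₂) (he : ∀ x, f₂ (e x) = f₁ x) (x : M₂) :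
    f₁ (e.symm x) = f₂ x := by
  rw [← he, e.apply_symm_apply]

def isometrySubgroupCongr (e : M₁ ≃ₗ[R] M₂) (he : ∀ x, f₂ (e x) = f₁ x) :
    isometrySubgroup R f₁ ≃* isometrySubgroup R f₂ where
  toFun T := ⟨e.symm.trans (T.1.trans e), fun x => by
    simp [he, T.2 _, map_symm_apply_of_map_apply e he]⟩
  invFun S := ⟨e.trans (S.1.trans e.symm), fun x => by
    simp [map_symm_apply_of_map_apply e he, S.2 _, he]⟩
  left_inv T := by ext; simp
  right_inv S := by ext; simp
  map_mul' T S := by ext; simp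

@[simp]
lemma isometrySubgroupCongr_apply (e : M₁ ≃ₗ[R] M₂) (he : ∀ x, f₂ (e x) = f₁ x)
    (T : isometrySubgroup R f₁) (x : M₂) :
    (isometrySubgroupCongr e he T : M₂ ≃ₗ[R] M₂) x = e ((T : M₁ ≃ₗ[R] M₁) (e.symm x)) :=
  rfl

@[simp]
lemma isometrySubgroupCongr_symm_apply (e : M₁ ≃ₗ[R] M₂) (he : ∀ x, f₂ (e x) = f₁ x)
    (S : isometrySubgroup R f₂) (x : M₁) :
    ((isometrySubgroupCongr e he).symm S : M₁ ≃ₗ[R] M₁) x = e.symm ((S : M₂ ≃ₗ[R] M₂) (e x)) :=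
  rfl

def stabilizerCongr (e : M₁ ≃ₗ[R] M₂) (he : ∀ x, f₂ (e x) = f₁ x) {v : M₁} {w : M₂}
    (hvw : e v = w) :
    stabilizer (isometrySubgroup R f₁) v ≃* stabilizer (isometrySubgroup R f₂) w where
  toFun T := ⟨isometrySubgroupCongr e he T, by
    rw [mem_stabilizer_isometrySubgroup, isometrySubgroupCongr_apply, ← hvw, e.symm_apply_apply,
      mem_stabilizer_isometrySubgroup.1 T.2]⟩
  invFun S := ⟨(isometrySubgroupCongr e he).symm S, by
    rw [mem_stabilizer_isometrySubgroup, isometrySubgroupCongr_symm_apply, hvw,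
      mem_stabilizer_isometrySubgroup.1 S.2, ← hvw, e.symm_apply_apply]⟩
  left_inv T := by simp
  right_inv S := by simp
  map_mul' T S := by simp

end IsometrySubgroup

section SqAdd

variable {R W : Type*} [CommRing R] [AddCommGroup W] [Module R W] {g : W → R}

variable (g) in
abbrev sqAdd : R × W → R := fun x => x.1 ^ 2 + g x.2

def sndRestrict (T : (R × W) ≃ₗ[R] (R × W)) : W →ₗ[R] W :=
  LinearMap.snd R R W ∘ₗ T.toLinearMap ∘ₗ LinearMap.inr R R W

variable [NoZeroDivisors R] [NeZero (2 : R)]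

lemma fst_apply_inr_eq_zero {T : (R × W) ≃ₗ[R] (R × W)} (hT : T ∈ isometrySubgroup R (sqAdd g))
    (h1 : T (1, 0) = (1, 0)) (w : W) : (T (0, w)).1 = 0 := by
  have hsplit : T (1, w) = (1, 0) + T (0, w) := by rw [← h1, ← map_add]; simp
  have h0 := hT (0, w)
  have h1w := hT (1, w)
  rw [hsplit] at h1w
  simp only [sqAdd, Prod.fst_add, Prod.snd_add, zero_add] at h0 h1w
  have h2 : 2 * (T (0, w)).1 = 0 := by linear_combination h1w - h0
  exact (mul_eq_zero.1 h2).resolve_left two_ne_zero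

lemma apply_eq_fst_sndRestrict {T : (R × W) ≃ₗ[R] (R × W)}
    (hT : T ∈ isometrySubgroup R (sqAdd g)) (h1 : T (1, 0) = (1, 0)) (x : R × W) :
    T x = (x.1, sndRestrict T x.2) := by
  have hx : x = x.1 • ((1 : R), (0 : W)) + (0, x.2) := by ext <;> simp
  conv_lhs => rw [hx, map_add, map_smul, h1]
  ext
  · simp [fst_apply_inr_eq_zero hT h1]
  · simp [sndRestrict]

lemma sndRestrict_mul (T : (R × W) ≃ₗ[R] (R × W)) {S : (R × W) ≃ₗ[R] (R × W)}
    (hS : S ∈ isometrySubgroup R (sqAdd g)) (hS1 : S (1, 0) = (1, 0)) (w : W) :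
    sndRestrict (T * S) w = sndRestrict T (sndRestrict S w) := by
  show (T (S (0, w))).2 = _
  rw [apply_eq_fst_sndRestrict hS hS1]
  rfl

def stabilizerSqAddMulEquiv :
    stabilizer (isometrySubgroup R (sqAdd g)) ((1 : R), (0 : W)) ≃* isometrySubgroup R g where
  toFun T := ⟨LinearEquiv.ofLinearMap (sndRestrict (T : (R × W) ≃ₗ[R] (R × W)))
      (sndRestrict ((T⁻¹ : stabilizer _ _) : (R × W) ≃ₗ[R] (R × W)))
      (LinearMap.ext fun w => by
        rw [LinearMap.comp_apply, ← sndRestrict_mul _ (T⁻¹).1.2 (T⁻¹).2]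
        simp only [InvMemClass.coe_inv, mul_inv_cancel]; rfl)
      (LinearMap.ext fun w => by
        rw [LinearMap.comp_apply, ← sndRestrict_mul _ T.1.2 T.2]
        simp only [InvMemClass.coe_inv, inv_mul_cancel]; rfl), fun w => by
    simpa [apply_eq_fst_sndRestrict T.1.2 T.2] using T.1.2 (0, w)⟩
  invFun S := ⟨⟨(LinearEquiv.refl R R).prodCongr S, fun x => by simp [S.2 x.2]⟩, by
    rw [mem_stabilizer_isometrySubgroup]; simp⟩
  left_inv T := by ext x <;> simp [apply_eq_fst_sndRestrict T.1.2 T.2 x]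
  right_inv S := by ext; simp [sndRestrict]
  map_mul' T S := by ext; simp [sndRestrict_mul _ S.1.2 S.2]

end SqAdd

namespace QuadraticMap

variable {K V : Type*} [Field K] [AddCommGroup V] [Module K V] (Q : QuadraticForm K V)

def reflection {u : V} (hu : Q u ≠ 0) : V ≃ₗ[K] V :=
  Module.reflection (x := u) (f := (Q u)⁻¹ • polarBilin Q u) <| by
    simp only [LinearMap.smul_apply, polarBilin_apply_apply, polar_self, smul_eq_mul, nsmul_eq_mul,
      Nat.cast_ofNat]
    field_simp

variable {Q}

lemma reflection_apply {u : V} (hu : Q u ≠ 0) (x : V) :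
    reflection Q hu x = x - ((Q u)⁻¹ * polar Q u x) • u :=
  Module.reflection_apply x _

@[simp]
lemma reflection_apply_self {u : V} (hu : Q u ≠ 0) : reflection Q hu u = -u :=
  Module.reflection_apply_self _

@[simp]
lemma map_reflection {u : V} (hu : Q u ≠ 0) (x : V) : Q (reflection Q hu x) = Q x := by
  rw [reflection_apply, sub_eq_add_neg, ← neg_smul, QuadraticMap.map_add Q, QuadraticMap.map_smul,
    polar_smul_right, polar_comm, smul_eq_mul, smul_eq_mul]
  field_simp
  ring

lemma reflection_sub_apply {u w : V} (huw : Q u = Q w) (h : Q (u - w) ≠ 0) :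
    reflection Q h u = w := by
  have hpolar : polar Q (u - w) u = Q (u - w) := by
    have hsplit := QuadraticMap.map_add Q (u - w) w
    rw [sub_add_cancel] at hsplit
    have hexpand : polar Q (u - w) u = polar Q (u - w) (u - w) + polar Q (u - w) w := by
      rw [← polar_add_right, sub_add_cancel]
    rw [hexpand, polar_self, nsmul_eq_mul, Nat.cast_ofNat]
    linear_combination huw - hsplit
  rw [reflection_apply, hpolar, inv_mul_cancel₀ h, one_smul, sub_sub_cancel]

lemma map_add_add_map_sub (u w : V) : Q (u + w) + Q (u - w) = 2 * (Q u + Q w) := by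
  rw [sub_eq_add_neg, QuadraticMap.map_add Q, QuadraticMap.map_add Q, polar_neg_right,
    QuadraticMap.map_neg]
  ring

lemma exists_mem_isometrySubgroup_apply_eq [NeZero (2 : K)] {u w : V} (huw : Q u = Q w)
    (hu : Q u ≠ 0) : ∃ g ∈ isometrySubgroup K Q, g u = w := by
  by_cases h : Q (u - w) = 0
  · have hw : Q w ≠ 0 := huw ▸ hu
    have h' : Q (u - -w) ≠ 0 := by
      intro h'
      rw [sub_neg_eq_add] at h'
      have h4 : (2 : K) * (2 * Q u) = 0 := by
        linear_combination h + h' + 2 * huw - map_add_add_map_sub (Q := Q) u w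
      simp [two_ne_zero, hu] at h4
    refine ⟨(reflection Q h').trans (reflection Q hw), fun x => by simp, ?_⟩
    rw [LinearEquiv.trans_apply, reflection_sub_apply (huw.trans (Q.map_neg w).symm) h', map_neg,
      reflection_apply_self, neg_neg]
  · exact ⟨reflection Q h, map_reflection h, reflection_sub_apply huw h⟩

end QuadraticMap

lemma Qpq_eq_weightedSumSquares (p q : ℕ) :
    Qpq p q =
      ⇑(weightedSumSquares ℝ fun i : Fin (p + q) => if (i : ℕ) < p then (1 : ℝ) else -1) := by
  funext x
  simp [Qpq, weightedSumSquares_apply, Finset.sum_ite, not_lt, _root_.sq, sub_eq_add_neg]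

def splitFirst {p q : ℕ} (hp : 1 ≤ p) : (Fin (p + q) → ℝ) ≃ₗ[ℝ] ℝ × (Fin (p - 1 + q) → ℝ) :=
  (LinearEquiv.funCongrLeft ℝ ℝ (finCongr (by omega))).trans (Fin.consLinearEquiv ℝ fun _ => ℝ).symm

@[simp]
lemma splitFirst_fst {p q : ℕ} (hp : 1 ≤ p) (x : Fin (p + q) → ℝ) :
    (splitFirst hp x).1 = x ⟨0, by omega⟩ :=
  rfl

@[simp]
lemma splitFirst_snd {p q : ℕ} (hp : 1 ≤ p) (x : Fin (p + q) → ℝ) (j : Fin (p - 1 + q)) :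
    (splitFirst hp x).2 j = x ⟨j + 1, by omega⟩ :=
  rfl

lemma sqAdd_splitFirst {p q : ℕ} (hp : 1 ≤ p) (x : Fin (p + q) → ℝ) :
    sqAdd (Qpq (p - 1) q) (splitFirst hp x) = Qpq p q x := by
  simp only [sqAdd, Qpq_eq_weightedSumSquares, weightedSumSquares_apply]
  rw [← (finCongr (by omega : p - 1 + q + 1 = p + q)).sum_comp, Fin.sum_univ_succ]
  simp only [splitFirst_fst, splitFirst_snd, _root_.sq, Nat.lt_sub_iff_add_lt, smul_eq_mul, ite_mul,
    one_mul, neg_mul, finCongr_apply, Fin.val_cast, Fin.coe_ofNat_eq_mod, Nat.zero_mod,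
    Nat.pos_of_ne_zero (by omega : p ≠ 0), ↓reduceIte, Fin.val_succ]
  rfl

lemma splitFirst_single_zero {p q : ℕ} (hp : 1 ≤ p) :
    splitFirst (q := q) hp (Pi.single ⟨0, by omega⟩ 1) = (1, 0) := by
  ext j
  · simp
  · simp [Fin.ext_iff]

lemma exists_linearEquiv_sqAdd_apply_eq {p q : ℕ} (hp : 1 ≤ p) {v : Fin (p + q) → ℝ}
    (hv : Qpq p q v = 1) :
    ∃ E : (Fin (p + q) → ℝ) ≃ₗ[ℝ] ℝ × (Fin (p - 1 + q) → ℝ),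
      (∀ x, sqAdd (Qpq (p - 1) q) (E x) = Qpq p q x) ∧ E v = (1, 0) := by
  have he₀ : Qpq p q (Pi.single ⟨0, by omega⟩ 1) = 1 := by
    rw [← sqAdd_splitFirst hp, splitFirst_single_zero]
    simp [sqAdd, Qpq]
  rw [Qpq_eq_weightedSumSquares] at hv he₀
  obtain ⟨g, hg, hgv⟩ :=
    exists_mem_isometrySubgroup_apply_eq (hv.trans he₀.symm) (by rw [hv]; exact one_ne_zero)
  refine ⟨g.trans (splitFirst hp), fun x => ?_, ?_⟩
  · rw [LinearEquiv.trans_apply, sqAdd_splitFirst, Qpq_eq_weightedSumSquares, hg]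
  · rw [LinearEquiv.trans_apply, hgv, splitFirst_single_zero]

/-- The stabilizer of a vector `v` with `Q_{p,q}(v) = 1` in `O(p,q)` is isomorphic,
as a group, to `O(p-1,q)`. -/
theorem OpqStabilizer_mulEquiv (p q : ℕ) (hp : 1 ≤ p) (v : Fin (p + q) → ℝ)
    (hv : Qpq p q v = 1) :
    Nonempty ((OpqStabilizer p q v) ≃* OpqGroup (p - 1) q) := by
  obtain ⟨E, hE, hEv⟩ := exists_linearEquiv_sqAdd_apply_eq hp hv
  -- `OpqGroup p q` and `OpqStabilizer p q v` unfold to `isometrySubgroup ℝ (Qpq p q)` and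
  -- `stabilizer (isometrySubgroup ℝ (Qpq p q)) v`.
  exact ⟨(stabilizerCongr E hE hEv).trans stabilizerSqAddMulEquiv⟩
end

section
/- Let n ≥ 1 and a ≥ 2 be natural numbers. Then every p ∈ MvPolynomial (Fin n) ℝ that is homogeneous of degree a can be written uniquely as p = h + r² * g, where h is homogeneous of degree a and harmonic (Δh = 0), g is homogeneous of degree a − 2, and r² = ∑ i, (X i)^2. -/
/-!
The apolar pairing `⟨p, q⟩ = ∑ₘ m! pₘ qₘ` is positive definite and makes multiplication by `Xᵢ`
adjoint to `∂ᵢ`, hence multiplication by `r²` adjoint to `Δ`. If `Δ (r² g) = 0` then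
`⟨r² g, r² g⟩ = ⟨g, Δ (r² g)⟩ = 0`, so `g = 0`. Thus `g ↦ Δ (r² g)` is injective on the
finite-dimensional space of forms of degree `a - 2`, hence onto it. Choosing `g` with
`Δ (r² g) = Δ p` and putting `h = p - r² g` gives the decomposition; injectivity gives uniqueness.
-/

open Finset
open scoped Nat

namespace MvPolynomial

variable {σ R : Type*} [Fintype σ]

section CommSemiring

variable [CommSemiring R]

noncomputable def radiusSq : MvPolynomial σ R := ∑ i, X i ^ 2

noncomputable def laplacian : MvPolynomial σ R →ₗ[R] MvPolynomial σ R :=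
  ∑ i, (pderiv i).toLinearMap ∘ₗ (pderiv i).toLinearMap

theorem laplacian_apply (p : MvPolynomial σ R) :
    laplacian p = ∑ i, pderiv i (pderiv i p) := by
  simp [laplacian, LinearMap.sum_apply]

theorem IsHomogeneous.laplacian {p : MvPolynomial σ R} {n : ℕ} (hp : p.IsHomogeneous n) :
    (laplacian p).IsHomogeneous (n - 2) := by
  rw [laplacian_apply]
  exact IsHomogeneous.sum _ _ _ fun i _ => hp.pderiv.pderiv

theorem isHomogeneous_radiusSq : (radiusSq : MvPolynomial σ R).IsHomogeneous 2 :=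
  IsHomogeneous.sum _ _ _ fun i _ => isHomogeneous_X_pow i 2

theorem IsHomogeneous.radiusSq_mul {g : MvPolynomial σ R} {n : ℕ} (hg : g.IsHomogeneous n) :
    (radiusSq * g).IsHomogeneous (n + 2) := by
  simpa only [add_comm] using isHomogeneous_radiusSq.mul hg

def multiFactorial (m : σ →₀ ℕ) : ℕ := ∏ i, (m i)!

theorem multiFactorial_pos (m : σ →₀ ℕ) : 0 < multiFactorial m :=
  prod_pos fun i _ => Nat.factorial_pos (m i)

theorem multiFactorial_add_single (m : σ →₀ ℕ) (i : σ) :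
    multiFactorial (m + Finsupp.single i 1) = (m i + 1) * multiFactorial m := by
  classical
  have : ∀ j, ((m + Finsupp.single i 1 : σ →₀ ℕ) j)! =
      Function.update (fun j => (m j)!) i (m i + 1)! j := by
    intro j; rcases eq_or_ne j i with rfl | h <;> simp [*]
  rw [multiFactorial, multiFactorial, Fintype.prod_congr _ _ this, prod_update_of_mem (mem_univ i),
    prod_eq_mul_prod_sdiff_singleton_of_mem (mem_univ i) (fun j => (m j)!), Nat.factorial_succ,
    mul_assoc]

noncomputable def apolar (p q : MvPolynomial σ R) : R :=
  ∑ m ∈ p.support, coeff m p * coeff m q * multiFactorial m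

theorem apolar_eq_sum_of_support_subset {p : MvPolynomial σ R} {s : Finset (σ →₀ ℕ)}
    (hs : p.support ⊆ s) (q : MvPolynomial σ R) :
    apolar p q = ∑ m ∈ s, coeff m p * coeff m q * multiFactorial m :=
  sum_subset hs fun m _ hm => by rw [notMem_support_iff.mp hm, zero_mul, zero_mul]

theorem apolar_zero_left (q : MvPolynomial σ R) : apolar 0 q = 0 := by
  rw [apolar, support_zero, sum_empty]

theorem apolar_zero_right (p : MvPolynomial σ R) : apolar p 0 = 0 := by
  simp only [apolar, coeff_zero, mul_zero, zero_mul, sum_const_zero]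

theorem apolar_add_left (p₁ p₂ q : MvPolynomial σ R) :
    apolar (p₁ + p₂) q = apolar p₁ q + apolar p₂ q := by
  classical
  rw [apolar_eq_sum_of_support_subset support_add,
    apolar_eq_sum_of_support_subset subset_union_left,
    apolar_eq_sum_of_support_subset subset_union_right, ← sum_add_distrib]
  simp only [coeff_add, add_mul]

theorem apolar_monomial_left (s : σ →₀ ℕ) (c : R) (q : MvPolynomial σ R) :
    apolar (monomial s c) q = c * coeff s q * multiFactorial s := by
  classical
  rw [apolar_eq_sum_of_support_subset support_monomial_subset, sum_singleton, coeff_monomial,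
    if_pos rfl]

theorem apolar_sum_left {ι : Type*} (s : Finset ι) (f : ι → MvPolynomial σ R)
    (q : MvPolynomial σ R) : apolar (∑ i ∈ s, f i) q = ∑ i ∈ s, apolar (f i) q :=
  let apolarLeft : MvPolynomial σ R →+ R :=
    { toFun p := apolar p q
      map_zero' := apolar_zero_left q
      map_add' p₁ p₂ := apolar_add_left p₁ p₂ q }
  map_sum apolarLeft f s

theorem apolar_sum_right {ι : Type*} (p : MvPolynomial σ R) (s : Finset ι)
    (f : ι → MvPolynomial σ R) : apolar p (∑ i ∈ s, f i) = ∑ i ∈ s, apolar p (f i) := by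
  simp only [apolar, coeff_sum, mul_sum, sum_mul]
  exact sum_comm

theorem apolar_X_mul (i : σ) (p q : MvPolynomial σ R) :
    apolar (X i * p) q = apolar p (pderiv i q) := by
  induction p using MvPolynomial.induction_on' with
  | add p₁ p₂ h₁ h₂ => rw [mul_add, apolar_add_left, apolar_add_left, h₁, h₂]
  | monomial s c =>
    rw [X, monomial_mul, one_mul, apolar_monomial_left, apolar_monomial_left, coeff_pderiv,
      add_comm (Finsupp.single i 1) s, multiFactorial_add_single]
    push_cast
    ring

theorem apolar_radiusSq_mul (g q : MvPolynomial σ R) :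
    apolar (radiusSq * g) q = apolar g (laplacian q) := by
  simp only [radiusSq, sum_mul, apolar_sum_left, laplacian_apply, apolar_sum_right, sq, mul_assoc,
    apolar_X_mul]

end CommSemiring

section OrderedRing

variable [CommRing R] [LinearOrder R] [IsStrictOrderedRing R]

theorem apolar_self_pos {p : MvPolynomial σ R} (hp : p ≠ 0) : 0 < apolar p p :=
  sum_pos (fun m hm => mul_pos (mul_self_pos.mpr (mem_support_iff.mp hm))
    (Nat.cast_pos.mpr (multiFactorial_pos m))) (support_nonempty.mpr hp)

theorem radiusSq_ne_zero [Nonempty σ] : (radiusSq : MvPolynomial σ R) ≠ 0 := by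
  intro h
  have := congrArg (eval fun _ => (1 : R)) h
  simp [radiusSq] at this

theorem laplacian_radiusSq_mul_injective [Nonempty σ] :
    Function.Injective fun g : MvPolynomial σ R => laplacian (radiusSq * g) := by
  intro g₁ g₂ h
  set g := g₁ - g₂
  have hΔ : laplacian (radiusSq * g) = 0 := by simp only [g, mul_sub, map_sub, h, sub_self]
  have hrg : radiusSq * g = 0 := by
    by_contra hne
    have := apolar_self_pos hne
    rw [apolar_radiusSq_mul, hΔ, apolar_zero_right] at this
    exact this.false
  exact sub_eq_zero.mp ((mul_eq_zero.mp hrg).resolve_left radiusSq_ne_zero)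

end OrderedRing

section Field

variable [Field R] [LinearOrder R] [IsStrictOrderedRing R]

theorem exists_isHomogeneous_laplacian_radiusSq_mul_eq [Nonempty σ] {q : MvPolynomial σ R} {n : ℕ}
    (hq : q.IsHomogeneous n) :
    ∃ g : MvPolynomial σ R, g.IsHomogeneous n ∧ laplacian (radiusSq * g) = q := by
  have hmaps : ∀ g ∈ homogeneousSubmodule σ R n,
      laplacian (radiusSq * g) ∈ homogeneousSubmodule σ R n := fun g hg =>
    by simpa using (IsHomogeneous.radiusSq_mul hg).laplacian
  let T := (laplacian ∘ₗ LinearMap.mulLeft R radiusSq).restrict hmaps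
  have : FiniteDimensional R (homogeneousSubmodule σ R n) :=
    Module.Finite.iff_fg.mpr (homogeneousSubmodule_fg σ R n)
  have hT : Function.Surjective T := LinearMap.injective_iff_surjective.mp fun g₁ g₂ h =>
    Subtype.ext (laplacian_radiusSq_mul_injective (congrArg Subtype.val h))
  obtain ⟨⟨g, hg⟩, hTg⟩ := hT ⟨q, hq⟩
  exact ⟨g, hg, congrArg Subtype.val hTg⟩

end Field

end MvPolynomial

open MvPolynomial

/-- Every polynomial `p` homogeneous of degree `a ≥ 2` can be written uniquely as
`p = h + r² * g` with `h` harmonic homogeneous of degree `a` and `g` homogeneous of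
degree `a - 2`, where `r² = ∑ i, (X i)^2`. -/
theorem homogeneous_eq_harmonic_add_rsq_mul_unique (n a : ℕ) (hn : 1 ≤ n) (ha : 2 ≤ a)
    (p : MvPolynomial (Fin n) ℝ) (hp : p ∈ homogeneousSubmodule (Fin n) ℝ a) :
    ∃! hg : MvPolynomial (Fin n) ℝ × MvPolynomial (Fin n) ℝ,
      p = hg.1 + (∑ i, (X i : MvPolynomial (Fin n) ℝ) ^ 2) * hg.2 ∧
      hg.1 ∈ homogeneousSubmodule (Fin n) ℝ a ∧
      (∑ i, pderiv i (pderiv i hg.1)) = 0 ∧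
      hg.2 ∈ homogeneousSubmodule (Fin n) ℝ (a - 2) := by
  have : Nonempty (Fin n) := Fin.pos_iff_nonempty.mp hn
  rw [mem_homogeneousSubmodule] at hp
  obtain ⟨g, hg, hΔg⟩ := exists_isHomogeneous_laplacian_radiusSq_mul_eq hp.laplacian
  have hrg : (radiusSq * g).IsHomogeneous a := by
    simpa only [Nat.sub_add_cancel ha] using hg.radiusSq_mul
  refine ⟨(p - radiusSq * g, g), ⟨(sub_add_cancel p _).symm, hp.sub hrg, ?_, hg⟩, ?_⟩
  · rw [← laplacian_apply, map_sub, hΔg, sub_self]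
  rintro ⟨h', g'⟩ ⟨hp', -, hh', -⟩
  change p = h' + radiusSq * g' at hp'
  rw [← laplacian_apply] at hh'
  have hg' : g' = g := laplacian_radiusSq_mul_injective <| show
      laplacian (radiusSq * g') = laplacian (radiusSq * g) by
    rw [hΔg, hp', map_add, hh', zero_add]
  rw [hp', hg', add_sub_cancel_right]
end

section
/- Let n ≥ 1 and a ≥ 0 be natural numbers, let p ∈ MvPolynomial (Fin n) ℝ be harmonic and homogeneous of degree a, and define f : EuclideanSpace ℝ (Fin n) → ℝ by f x = ‖x‖ ^ (−(a:ℝ)) * (MvPolynomial.eval (fun i => x i) p) (real power). Then for every x ≠ 0, the Laplacian of f at x (the sum over the standard orthonormal basis vectors eᵢ of the second directional derivatives of f at x along eᵢ, i.e. the trace of the second Fréchet derivative of f at x) equals −(a * (a + n − 2)) * ‖x‖ ^ (−2:ℝ) * f x. -/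
open MvPolynomial Filter Topology
open scoped RealInnerProductSpace

/-!
Write `f = r ^ s * p` with `r = ‖x‖` and `s = -a`. The Leibniz rule for second directional
derivatives gives `Δ(r ^ s * p) = Δ(r ^ s) * p + 2 ⟪∇(r ^ s), ∇p⟫ + r ^ s * Δp`, where
`Δ(r ^ s) = s (s + n - 2) r ^ (s - 2)` and `∇(r ^ s) = s r ^ (s - 2) x`. The last term vanishes
because `p` is harmonic, and `⟪x, ∇p⟫ = a p` by Euler's identity, so
`Δf = s (s + n - 2 + 2a) r ^ (s - 2) p = -a (a + n - 2) r ^ (-2) f`.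
-/

section DirDeriv

variable {E : Type*} [NormedAddCommGroup E] [NormedSpace ℝ E]

noncomputable def dirDeriv (v : E) (g : E → ℝ) (y : E) : ℝ := fderiv ℝ g y v

theorem dirDeriv_dirDeriv_mul {g h : E → ℝ} {x v : E}
    (hg : ∀ᶠ y in 𝓝 x, DifferentiableAt ℝ g y) (hh : ∀ᶠ y in 𝓝 x, DifferentiableAt ℝ h y)
    (hg' : DifferentiableAt ℝ (dirDeriv v g) x) (hh' : DifferentiableAt ℝ (dirDeriv v h) x) :
    dirDeriv v (dirDeriv v fun y => g y * h y) x =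
      dirDeriv v (dirDeriv v g) x * h x + 2 * (dirDeriv v g x * dirDeriv v h x) +
        g x * dirDeriv v (dirDeriv v h) x := by
  have hfirst : dirDeriv v (fun y => g y * h y) =ᶠ[𝓝 x]
      fun y => dirDeriv v g y * h y + g y * dirDeriv v h y := by
    filter_upwards [hg, hh] with y hgy hhy
    simp only [dirDeriv, fderiv_fun_mul hgy hhy, add_apply, smul_apply, smul_eq_mul]
    ring
  rw [dirDeriv, hfirst.fderiv_eq,
    fderiv_fun_add (hg'.fun_mul hh.self_of_nhds) (hg.self_of_nhds.fun_mul hh'),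
    fderiv_fun_mul hg' hh.self_of_nhds, fderiv_fun_mul hg.self_of_nhds hh']
  simp only [add_apply, smul_apply, smul_eq_mul, dirDeriv]
  ring

end DirDeriv

section NormRpow

variable {E : Type*} [NormedAddCommGroup E] [InnerProductSpace ℝ E] {x : E}

theorem hasFDerivAt_norm_rpow_of_ne_zero (hx : x ≠ 0) (s : ℝ) :
    HasFDerivAt (fun y : E => ‖y‖ ^ s) ((s * ‖x‖ ^ (s - 2)) • innerSL ℝ x) x := by
  have hpos : 0 < ‖x‖ := norm_pos_iff.mpr hx
  have h := (hasStrictFDerivAt_norm_sq x).hasFDerivAt.rpow_const (p := s / 2)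
    (Or.inl (by positivity))
  have hsq : ∀ y : E, (‖y‖ ^ 2) ^ (s / 2) = ‖y‖ ^ s := fun y => by
    rw [← Real.rpow_natCast, ← Real.rpow_mul (norm_nonneg y)]; ring_nf
  have hpow : (‖x‖ ^ 2) ^ (s / 2 - 1) = ‖x‖ ^ (s - 2) := by
    rw [← Real.rpow_natCast, ← Real.rpow_mul hpos.le]; ring_nf
  simp only [hsq, hpow] at h
  convert h using 1
  ext v
  simp only [smul_apply, smul_eq_mul, nsmul_eq_mul]
  push_cast
  ring

theorem dirDeriv_norm_rpow_eventuallyEq (hx : x ≠ 0) (s : ℝ) (v : E) :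
    dirDeriv v (fun y : E => ‖y‖ ^ s) =ᶠ[𝓝 x] fun y => s * ‖y‖ ^ (s - 2) * ⟪v, y⟫ := by
  filter_upwards [isOpen_ne.mem_nhds hx] with y hy
  rw [dirDeriv, (hasFDerivAt_norm_rpow_of_ne_zero hy s).fderiv]
  simp [real_inner_comm]

theorem hasFDerivAt_dirDeriv_norm_rpow (hx : x ≠ 0) (s : ℝ) (v : E) :
    HasFDerivAt (dirDeriv v fun y : E => ‖y‖ ^ s)
      ((s * ((s - 2) * ‖x‖ ^ (s - 2 - 2)) * ⟪v, x⟫) • innerSL ℝ x +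
        (s * ‖x‖ ^ (s - 2)) • innerSL ℝ v) x := by
  have h := ((hasFDerivAt_norm_rpow_of_ne_zero hx (s - 2)).const_mul s).mul
    (innerSL ℝ v).hasFDerivAt
  refine (h.congr_fderiv ?_).congr_of_eventuallyEq (dirDeriv_norm_rpow_eventuallyEq hx s v)
  ext w
  simp only [add_apply, smul_apply, smul_eq_mul, innerSL_apply_apply]
  ring

theorem sum_dirDeriv_dirDeriv_norm_rpow {ι : Type*} [Fintype ι] (b : OrthonormalBasis ι ℝ E)
    (hx : x ≠ 0) (s : ℝ) :
    ∑ i, dirDeriv (b i) (dirDeriv (b i) fun y : E => ‖y‖ ^ s) x =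
      s * (s + Module.finrank ℝ E - 2) * ‖x‖ ^ (s - 2) := by
  have hpow : ‖x‖ ^ (s - 2 - 2) * ‖x‖ ^ 2 = ‖x‖ ^ (s - 2) := by
    rw [← Real.rpow_natCast, ← Real.rpow_add (norm_pos_iff.mpr hx)]
    norm_num
  have hsq : ∀ i, ⟪b i, x⟫ * ⟪x, b i⟫ = ⟪x, b i⟫ ^ 2 := fun i => by
    rw [real_inner_comm, sq]
  simp only [dirDeriv.eq_1 (b _) (dirDeriv _ _), (hasFDerivAt_dirDeriv_norm_rpow hx s _).fderiv,
    add_apply, smul_apply, smul_eq_mul, innerSL_apply_apply, real_inner_self_eq_norm_sq,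
    b.norm_eq_one, mul_assoc, hsq, Finset.sum_add_distrib, ← Finset.mul_sum, b.sum_sq_inner_left,
    Finset.sum_const, Finset.card_univ, ← Module.finrank_eq_card_basis b.toBasis]
  rw [← hpow]
  ring

theorem sum_dirDeriv_dirDeriv_norm_rpow_mul {ι : Type*} [Fintype ι] (b : OrthonormalBasis ι ℝ E)
    (hx : x ≠ 0) (s : ℝ) {h : E → ℝ} (hh : ∀ᶠ y in 𝓝 x, DifferentiableAt ℝ h y)
    (hh' : ∀ i, DifferentiableAt ℝ (dirDeriv (b i) h) x) :
    ∑ i, dirDeriv (b i) (dirDeriv (b i) fun y => ‖y‖ ^ s * h y) x =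
      ‖x‖ ^ (s - 2) * (s * (s + Module.finrank ℝ E - 2) * h x +
        2 * s * ∑ i, ⟪b i, x⟫ * dirDeriv (b i) h x) +
      ‖x‖ ^ s * ∑ i, dirDeriv (b i) (dirDeriv (b i) h) x := by
  have hnorm : ∀ᶠ y in 𝓝 x, DifferentiableAt ℝ (fun y : E => ‖y‖ ^ s) y := by
    filter_upwards [isOpen_ne.mem_nhds hx] with y hy
    exact (hasFDerivAt_norm_rpow_of_ne_zero hy s).differentiableAt
  rw [Finset.sum_congr rfl fun i _ => dirDeriv_dirDeriv_mul hnorm hh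
    (hasFDerivAt_dirDeriv_norm_rpow hx s (b i)).differentiableAt (hh' i)]
  simp only [Finset.sum_add_distrib, ← Finset.sum_mul, ← Finset.mul_sum,
    sum_dirDeriv_dirDeriv_norm_rpow b hx s, (dirDeriv_norm_rpow_eventuallyEq hx s _).self_of_nhds]
  simp only [mul_assoc, ← Finset.mul_sum]
  ring

end NormRpow

namespace MvPolynomial

variable {ι : Type*} [Fintype ι]

theorem differentiable_eval (q : MvPolynomial ι ℝ) :
    Differentiable ℝ fun z : EuclideanSpace ℝ ι => eval (⇑z) q :=
  fun z => ((AnalyticOnNhd.eval_mvPolynomial q _ trivial).differentiableAt).comp z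
    (PiLp.continuousLinearEquiv 2 ℝ (fun _ : ι => ℝ)).differentiableAt

variable [DecidableEq ι]

theorem dirDeriv_single_eval (q : MvPolynomial ι ℝ) (i : ι) :
    dirDeriv (EuclideanSpace.single i 1) (fun z : EuclideanSpace ℝ ι => eval (⇑z) q) =
      fun z : EuclideanSpace ℝ ι => eval (⇑z) (pderiv i q) := by
  ext y
  induction q using MvPolynomial.induction_on with
  | C r => simp [dirDeriv]
  | add p q hp hq =>
    simp only [dirDeriv, map_add] at hp hq ⊢
    rw [fderiv_fun_add (differentiable_eval p y) (differentiable_eval q y)]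
    simp [hp, hq]
  | mul_X p j hp =>
    have hcoord : HasFDerivAt (fun z : EuclideanSpace ℝ ι => z j)
        (EuclideanSpace.proj j : EuclideanSpace ℝ ι →L[ℝ] ℝ) y :=
      (EuclideanSpace.proj j : EuclideanSpace ℝ ι →L[ℝ] ℝ).hasFDerivAt
    simp only [dirDeriv, map_mul, eval_X] at hp ⊢
    rw [fderiv_fun_mul (differentiable_eval p y) hcoord.differentiableAt, hcoord.fderiv]
    simp [hp, pderiv_X, Pi.single_apply, PiLp.single_apply, eq_comm, apply_ite (eval _)]

theorem sum_inner_single_mul_dirDeriv_eval {a : ℕ} {q : MvPolynomial ι ℝ} (hq : q.IsHomogeneous a)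
    (y : EuclideanSpace ℝ ι) :
    ∑ i, ⟪EuclideanSpace.single i 1, y⟫ *
        dirDeriv (EuclideanSpace.single i 1) (fun z : EuclideanSpace ℝ ι => eval (⇑z) q) y =
      a * eval (⇑y) q := by
  simpa [dirDeriv_single_eval, EuclideanSpace.inner_single_left] using
    congrArg (eval (⇑y)) hq.sum_X_mul_pderiv

theorem sum_dirDeriv_dirDeriv_single_eval (q : MvPolynomial ι ℝ) (y : EuclideanSpace ℝ ι) :
    ∑ i, dirDeriv (EuclideanSpace.single i 1)
        (dirDeriv (EuclideanSpace.single i 1) fun z : EuclideanSpace ℝ ι => eval (⇑z) q) y =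
      eval (⇑y) (∑ i, pderiv i (pderiv i q)) := by
  simp [dirDeriv_single_eval]

end MvPolynomial

theorem laplacian_homogeneous_extension_eq_general (n a : ℕ)
    (p : MvPolynomial (Fin n) ℝ)
    (hhom : p ∈ homogeneousSubmodule (Fin n) ℝ a)
    (hharm : (∑ i, pderiv i (pderiv i p)) = 0)
    (f : EuclideanSpace ℝ (Fin n) → ℝ)
    (hf : ∀ x : EuclideanSpace ℝ (Fin n),
      f x = ‖x‖ ^ (-(a : ℝ)) * MvPolynomial.eval (fun i => x i) p)
    (x : EuclideanSpace ℝ (Fin n)) (hx : x ≠ 0) :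
    ∑ i, fderiv ℝ (fun y => fderiv ℝ f y (EuclideanSpace.single i 1)) x
        (EuclideanSpace.single i 1) =
      -((a : ℝ) * ((a : ℝ) + n - 2)) * ‖x‖ ^ (-2 : ℝ) * f x := by
  obtain rfl : f = fun y : EuclideanSpace ℝ (Fin n) => ‖y‖ ^ (-(a : ℝ)) * eval (⇑y) p := funext hf
  have hexpand := sum_dirDeriv_dirDeriv_norm_rpow_mul (EuclideanSpace.basisFun (Fin n) ℝ) hx (-(a : ℝ))
    (.of_forall (differentiable_eval p)) fun i => by
      rw [EuclideanSpace.basisFun_apply, dirDeriv_single_eval]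
      exact differentiable_eval _ x
  simp only [EuclideanSpace.basisFun_apply, finrank_euclideanSpace_fin] at hexpand
  change ∑ i, dirDeriv _ (dirDeriv _ _) x = _
  rw [hexpand, sum_inner_single_mul_dirDeriv_eval ((mem_homogeneousSubmodule _ _).mp hhom),
    sum_dirDeriv_dirDeriv_single_eval, hharm, map_zero, mul_zero, add_zero,
    show -(a : ℝ) - 2 = -2 + -(a : ℝ) by ring, Real.rpow_add (norm_pos_iff.mpr hx)]
  ring

/-- If `p` is harmonic and homogeneous of degree `a`, then the degree-zero homogeneous extension
`f x = ‖x‖^(−a) · p(x)` of its restriction to the unit sphere satisfies, at every `x ≠ 0`,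
`Δf(x) = −a(a + n − 2) ‖x‖⁻² f(x)`, where `Δf(x)` is the sum over the standard orthonormal basis
of the second directional derivatives of `f` (the trace of the second Fréchet derivative). -/
theorem laplacian_homogeneous_extension_eq (n a : ℕ) (hn : 1 ≤ n)
    (p : MvPolynomial (Fin n) ℝ)
    (hhom : p ∈ homogeneousSubmodule (Fin n) ℝ a)
    (hharm : (∑ i, pderiv i (pderiv i p)) = 0)
    (f : EuclideanSpace ℝ (Fin n) → ℝ)
    (hf : ∀ x : EuclideanSpace ℝ (Fin n),
      f x = ‖x‖ ^ (-(a : ℝ)) * MvPolynomial.eval (fun i => x i) p)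
    (x : EuclideanSpace ℝ (Fin n)) (hx : x ≠ 0) :
    ∑ i, fderiv ℝ (fun y => fderiv ℝ f y (EuclideanSpace.single i 1)) x
        (EuclideanSpace.single i 1) =
      -((a : ℝ) * ((a : ℝ) + n - 2)) * ‖x‖ ^ (-2 : ℝ) * f x :=
  laplacian_homogeneous_extension_eq_general n a p hhom hharm f hf x hx
end

section
/- Let n ≥ 0 and let σ be the ℂ-algebra endomorphism of MvPolynomial (Fin n ⊕ Fin n) ℂ determined by X (Sum.inl j) ↦ X (Sum.inl j) + Complex.I • X (Sum.inr j) and X (Sum.inr j) ↦ X (Sum.inl j) − Complex.I • X (Sum.inr j). Then: (1) σ is bijective; (2) for every P, ∑_{s : Fin n ⊕ Fin n} pderiv s (pderiv s (σ P)) = 4 • σ (□P); and consequently (3) if P is bihomogeneous of bidegree (b, c) and □-harmonic, then σ P is homogeneous of total degree b + c and satisfies ∑_s pderiv s (pderiv s (σ P)) = 0. -/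
open MvPolynomial

/-- The substitution `z_j ↦ x_j + i y_j`, `w_j ↦ x_j − i y_j`: the `ℂ`-algebra endomorphism of
`MvPolynomial (Fin n ⊕ Fin n) ℂ` determined by
`X (Sum.inl j) ↦ X (Sum.inl j) + I • X (Sum.inr j)` and
`X (Sum.inr j) ↦ X (Sum.inl j) − I • X (Sum.inr j)`. -/
noncomputable def realComplexSubst (n : ℕ) :
    MvPolynomial (Fin n ⊕ Fin n) ℂ →ₐ[ℂ] MvPolynomial (Fin n ⊕ Fin n) ℂ :=
  MvPolynomial.aeval (Sum.elim
    (fun j => X (Sum.inl j) + Complex.I • X (Sum.inr j))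
    (fun j => X (Sum.inl j) - Complex.I • X (Sum.inr j)))

/-!
Write `x, y` for the variables of the image of `σ` and `z, w` for those of its source. The chain
rule for `z = x + i y`, `w = x − i y` gives `∂_x = ∂_z + ∂_w` and `∂_y = i (∂_z − ∂_w)`, hence
`∂_x² + ∂_y² = (∂_z + ∂_w)² − (∂_z − ∂_w)² = 4 ∂_z ∂_w` because partial derivatives commute.
Being an invertible linear change of variables, `σ` is bijective and preserves total degree, and
bidegree `(b, c)` gives total degree `b + c` because the two weights add up to the total degree.
-/

namespace MvPolynomial

variable {σ τ R : Type*} [CommSemiring R]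

theorem pderiv_comm (i j : σ) (p : MvPolynomial σ R) :
    pderiv i (pderiv j p) = pderiv j (pderiv i p) := by
  classical
  induction p using MvPolynomial.induction_on with
  | C a => simp
  | add p q hp hq => simp only [map_add, hp, hq]
  | mul_X p s ih =>
    simp only [Derivation.leibniz, map_add, pderiv_X, ih, smul_eq_mul, Pi.single_apply,
      apply_ite (pderiv _), pderiv_one, map_zero, ite_self, mul_zero]
    ring

theorem pderiv_aeval [Fintype σ] (f : σ → MvPolynomial τ R) (i : τ) (p : MvPolynomial σ R) :
    pderiv i (aeval f p) = ∑ j, aeval f (pderiv j p) * pderiv i (f j) := by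
  classical
  induction p using MvPolynomial.induction_on with
  | C a => simp
  | add p q hp hq => simp only [map_add, hp, hq, add_mul, Finset.sum_add_distrib]
  | mul_X p s ih =>
    simp only [map_mul, aeval_X, pderiv_mul, ih, pderiv_X, map_add, add_mul,
      Finset.sum_add_distrib, Finset.sum_mul, Pi.single_apply, mul_ite, mul_one, mul_zero,
      apply_ite (aeval f), map_zero, ite_mul, zero_mul, Finset.sum_ite_eq, Finset.mem_univ,
      if_true]
    exact congrArg (· + _) (Finset.sum_congr rfl fun j _ => mul_right_comm _ _ _)

theorem IsWeightedHomogeneous.add_weight {M : Type*} [AddCommMonoid M] {w₁ w₂ : σ → M}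
    {φ : MvPolynomial σ R} {m n : M} (h₁ : IsWeightedHomogeneous w₁ φ m)
    (h₂ : IsWeightedHomogeneous w₂ φ n) : IsWeightedHomogeneous (w₁ + w₂) φ (m + n) := by
  intro d hd
  rw [← h₁ hd, ← h₂ hd]
  simp only [Finsupp.weight_apply, Finsupp.sum, Pi.add_apply, smul_add, Finset.sum_add_distrib]

theorem isHomogeneous_add_of_bihomogeneous {P : MvPolynomial (σ ⊕ τ) R} {b c : ℕ}
    (hb : IsWeightedHomogeneous (Sum.elim (fun _ => 1) fun _ => 0) P b)
    (hc : IsWeightedHomogeneous (Sum.elim (fun _ => 0) fun _ => 1) P c) :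
    P.IsHomogeneous (b + c) := by
  have hweight : (Sum.elim (fun _ => 1) fun _ => 0) + (Sum.elim (fun _ => 0) fun _ => 1) =
      (1 : σ ⊕ τ → ℕ) := by
    ext (j | j) <;> rfl
  have hbc := hb.add_weight hc
  rwa [hweight] at hbc

end MvPolynomial

/-- The inverse substitution `x_j ↦ (z_j + w_j) / 2`, `y_j ↦ i (w_j − z_j) / 2`. -/
noncomputable def realComplexSubstInv (n : ℕ) :
    MvPolynomial (Fin n ⊕ Fin n) ℂ →ₐ[ℂ] MvPolynomial (Fin n ⊕ Fin n) ℂ :=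
  aeval (Sum.elim (fun j => (2⁻¹ : ℂ) • (X (Sum.inl j) + X (Sum.inr j)))
    (fun j => (Complex.I / 2) • (X (Sum.inr j) - X (Sum.inl j))))

namespace realComplexSubst

open Complex Sum

variable {n : ℕ}

lemma comp_inv : (realComplexSubst n).comp (realComplexSubstInv n) = AlgHom.id ℂ _ := by
  ext (j | j) : 1 <;>
    simp only [realComplexSubst, realComplexSubstInv, AlgHom.comp_apply, AlgHom.id_apply, aeval_X,
      Sum.elim_inl, Sum.elim_inr, map_add, map_sub, map_smul, smul_add, smul_sub, smul_smul] <;>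
    match_scalars <;> grind [I_mul_I]

lemma inv_comp : (realComplexSubstInv n).comp (realComplexSubst n) = AlgHom.id ℂ _ := by
  ext (j | j) : 1 <;>
    simp only [realComplexSubst, realComplexSubstInv, AlgHom.comp_apply, AlgHom.id_apply, aeval_X,
      Sum.elim_inl, Sum.elim_inr, map_add, map_sub, map_smul, smul_add, smul_sub, smul_smul] <;>
    match_scalars <;> grind [I_mul_I]

noncomputable def algEquiv (n : ℕ) :
    MvPolynomial (Fin n ⊕ Fin n) ℂ ≃ₐ[ℂ] MvPolynomial (Fin n ⊕ Fin n) ℂ :=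
  AlgEquiv.ofAlgHom (realComplexSubst n) (realComplexSubstInv n) comp_inv inv_comp

theorem bijective : Function.Bijective (realComplexSubst n) :=
  (algEquiv n).bijective

theorem isHomogeneous {m : ℕ} {P : MvPolynomial (Fin n ⊕ Fin n) ℂ} (hP : P.IsHomogeneous m) :
    (realComplexSubst n P).IsHomogeneous m := by
  have hIX (j : Fin n) : (I • X (inr j) : MvPolynomial (Fin n ⊕ Fin n) ℂ).IsHomogeneous 1 := by
    simpa only [smul_eq_C_mul] using isHomogeneous_C_mul_X I (inr j)
  rw [← one_mul m, realComplexSubst]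
  refine hP.aeval _ ?_
  rintro (j | j)
  exacts [(isHomogeneous_X ℂ (inl j)).add (hIX j), (isHomogeneous_X ℂ (inl j)).sub (hIX j)]

lemma pderiv_inl (k : Fin n) (P : MvPolynomial (Fin n ⊕ Fin n) ℂ) :
    pderiv (inl k) (realComplexSubst n P) =
      realComplexSubst n (pderiv (inl k) P) + realComplexSubst n (pderiv (inr k) P) := by
  rw [realComplexSubst, pderiv_aeval, Fintype.sum_sum_type]
  simp only [Sum.elim_inl, Sum.elim_inr, map_add, map_sub, Derivation.map_smul, pderiv_X,
    Pi.single_apply, inl.injEq, reduceCtorEq, if_false, smul_zero, add_zero, sub_zero, mul_ite,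
    mul_one, mul_zero, Finset.sum_ite_eq', Finset.mem_univ, if_true]

lemma pderiv_inr (k : Fin n) (P : MvPolynomial (Fin n ⊕ Fin n) ℂ) :
    pderiv (inr k) (realComplexSubst n P) =
      I • (realComplexSubst n (pderiv (inl k) P) - realComplexSubst n (pderiv (inr k) P)) := by
  rw [realComplexSubst, pderiv_aeval, Fintype.sum_sum_type]
  simp only [Sum.elim_inl, Sum.elim_inr, map_add, map_sub, Derivation.map_smul, pderiv_X,
    Pi.single_apply, inr.injEq, reduceCtorEq, if_false, zero_add, zero_sub, smul_ite, smul_zero,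
    mul_ite, mul_zero, mul_neg, mul_smul_comm, mul_one, Finset.sum_neg_distrib,
    Finset.sum_ite_eq', Finset.mem_univ, if_true, smul_sub, ← sub_eq_add_neg]

lemma laplacian_coord (k : Fin n) (P : MvPolynomial (Fin n ⊕ Fin n) ℂ) :
    pderiv (inl k) (pderiv (inl k) (realComplexSubst n P)) +
        pderiv (inr k) (pderiv (inr k) (realComplexSubst n P)) =
      4 • realComplexSubst n (pderiv (inl k) (pderiv (inr k) P)) := by
  simp only [pderiv_inl, pderiv_inr, map_add, map_sub, Derivation.map_smul, smul_sub, smul_smul,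
    I_mul_I, pderiv_comm (inr k) (inl k) P]
  module

theorem laplacian (P : MvPolynomial (Fin n ⊕ Fin n) ℂ) :
    ∑ s, pderiv s (pderiv s (realComplexSubst n P)) =
      4 • realComplexSubst n (∑ j, pderiv (inl j) (pderiv (inr j) P)) := by
  rw [Fintype.sum_sum_type, ← Finset.sum_add_distrib, map_sum, Finset.smul_sum]
  exact Finset.sum_congr rfl fun k _ => laplacian_coord k P

end realComplexSubst

/-- The substitution `σ` is bijective; it intertwines the real Laplacian with `4` times the
complex Laplacian `□P = ∑ j, pderiv (inl j) (pderiv (inr j) P)`; and consequently it carries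
`□`-harmonic bihomogeneous polynomials of bidegree `(b, c)` to harmonic polynomials homogeneous
of total degree `b + c`. -/
theorem realComplexSubst_bijective_laplacian (n : ℕ) :
    Function.Bijective (realComplexSubst n) ∧
    (∀ P : MvPolynomial (Fin n ⊕ Fin n) ℂ,
      (∑ s, pderiv s (pderiv s (realComplexSubst n P))) =
        4 • realComplexSubst n (∑ j, pderiv (Sum.inl j) (pderiv (Sum.inr j) P))) ∧
    (∀ (b c : ℕ) (P : MvPolynomial (Fin n ⊕ Fin n) ℂ),
      IsWeightedHomogeneous (Sum.elim (fun _ => 1) fun _ => 0) P b →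
      IsWeightedHomogeneous (Sum.elim (fun _ => 0) fun _ => 1) P c →
      (∑ j, pderiv (Sum.inl j) (pderiv (Sum.inr j) P)) = 0 →
      realComplexSubst n P ∈ homogeneousSubmodule (Fin n ⊕ Fin n) ℂ (b + c) ∧
        (∑ s, pderiv s (pderiv s (realComplexSubst n P))) = 0) := by
  refine ⟨realComplexSubst.bijective, realComplexSubst.laplacian, fun b c P hb hc hP => ⟨?_, ?_⟩⟩
  · exact (mem_homogeneousSubmodule _ _).mpr
      (realComplexSubst.isHomogeneous (isHomogeneous_add_of_bihomogeneous hb hc))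
  · rw [realComplexSubst.laplacian, hP, map_zero, smul_zero]
end

section
/- Let n ≥ 2 and b, c ≥ 0 be natural numbers, and let H_{b,c} be the ℂ-submodule of MvPolynomial (Fin n ⊕ Fin n) ℂ consisting of □-harmonic polynomials that are bihomogeneous of bidegree (b, c). Then (n − 1) * ((n − 2)!)^2 * Module.finrank ℂ H_{b,c} = (b + c + n − 1) * (∏_{j=1}^{n−2} (b + j)) * (∏_{j=1}^{n−2} (c + j)). -/
open MvPolynomial

/-- The complex Laplacian `□P = ∑ j, pderiv (Sum.inl j) (pderiv (Sum.inr j) P)` as a linear map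
on `MvPolynomial (Fin n ⊕ Fin n) ℂ` (the `z`-variables are `X (Sum.inl j)`, the `w`-variables
are `X (Sum.inr j)`). -/
noncomputable def complexLaplacian (n : ℕ) :
    MvPolynomial (Fin n ⊕ Fin n) ℂ →ₗ[ℂ] MvPolynomial (Fin n ⊕ Fin n) ℂ :=
  ∑ j : Fin n, ((pderiv (R := ℂ) (Sum.inl j)).toLinearMap ∘ₗ
    (pderiv (Sum.inr j)).toLinearMap)

/-- The space `H_{b,c}` of `□`-harmonic polynomials bihomogeneous of bidegree `(b, c)`:
weighted homogeneous of degree `b` for the weight `(1,…,1,0,…,0)` (the `z`-variables) and of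
degree `c` for the weight `(0,…,0,1,…,1)` (the `w`-variables), annihilated by `□`. -/
noncomputable def biharmonicSubmodule (n b c : ℕ) :
    Submodule ℂ (MvPolynomial (Fin n ⊕ Fin n) ℂ) :=
  weightedHomogeneousSubmodule ℂ (Sum.elim (fun _ => 1) fun _ => 0) b ⊓
    weightedHomogeneousSubmodule ℂ (Sum.elim (fun _ => 0) fun _ => 1) c ⊓
    LinearMap.ker (complexLaplacian n)

/-!
For the pairing `⟪P, Q⟫ = ∑_α α! P_α Q_α`, the derivation `∂/∂x_i` is adjoint to multiplication
by `x_i`, so `□ = ∑ ∂_{z_j} ∂_{w_j}` is adjoint to multiplication by `q = ∑ z_j w_j`. As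
`⟪R, R̄⟫ > 0` for `R ≠ 0`, `□(q P) = 0` forces `q P = 0`. Hence `P ↦ □(q P)` is injective,
and therefore bijective, on the finite-dimensional space `V_{b,c}` of bihomogeneous
polynomials. So `□ : V_{b+1,c+1} → V_{b,c}` is onto and
`dim H_{b+1,c+1} = dim V_{b+1,c+1} - dim V_{b,c}`, while `H_{b,c} = V_{b,c}` when `b = 0` or
`c = 0`. As `dim V_{b,c}` is a product of two binomial coefficients, what remains is a
binomial identity.
-/

open Finsupp Nat

section FischerPairing

variable {σ : Type*}

lemma Finsupp.prod_factorial_add_single (d : σ →₀ ℕ) (i : σ) :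
    ((d + single i 1).prod fun _ k => (k ! : ℂ)) = (d i + 1) * d.prod fun _ k => (k ! : ℂ) := by
  classical
  rw [← mul_prod_erase' _ i _ (by simp), ← mul_prod_erase' d i _ (by simp)]
  simp [erase_add, Nat.factorial_succ, mul_assoc]

noncomputable def fischerPairing :
    MvPolynomial σ ℂ →ₗ[ℂ] MvPolynomial σ ℂ →ₗ[ℂ] ℂ :=
  Finsupp.lsum ℂ (fun d : σ →₀ ℕ => LinearMap.toSpanSingleton ℂ _
      ((d.prod fun _ k => (k ! : ℂ)) • lcoeff ℂ d)) ∘ₗ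
    (AddMonoidAlgebra.coeffLinearEquiv ℂ).toLinearMap

lemma fischerPairing_apply (P Q : MvPolynomial σ ℂ) :
    fischerPairing P Q =
      ∑ d ∈ P.support, coeff d P * coeff d Q * d.prod fun _ k => (k ! : ℂ) := by
  simp only [fischerPairing, LinearMap.coe_comp, coe_lsum, Finsupp.sum,
    LinearMap.toSpanSingleton_apply, LinearEquiv.coe_coe, Function.comp_apply,
    AddMonoidAlgebra.coeffLinearEquiv_apply, LinearMap.coe_sum, LinearMap.coe_smul,
    Finset.sum_apply, Pi.smul_apply, lcoeff_apply, smul_eq_mul]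
  exact Finset.sum_congr rfl fun d _ => by
    rw [show AddMonoidAlgebra.coeff P d = coeff d P from rfl]
    ring

lemma fischerPairing_monomial (d : σ →₀ ℕ) (a : ℂ) (Q : MvPolynomial σ ℂ) :
    fischerPairing (monomial d a) Q = a * coeff d Q * d.prod fun _ k => (k ! : ℂ) := by
  simp only [fischerPairing, LinearMap.coe_comp, coe_lsum, LinearEquiv.coe_coe,
    Function.comp_apply, AddMonoidAlgebra.coeffLinearEquiv_apply,
    LinearMap.toSpanSingleton_apply, zero_smul, sum_monomial_eq, LinearMap.smul_apply,
    lcoeff_apply, smul_eq_mul]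
  ring

lemma fischerPairing_pderiv (i : σ) (P R : MvPolynomial σ ℂ) :
    fischerPairing (pderiv i P) R = fischerPairing P (X i * R) := by
  classical
  induction P using MvPolynomial.induction_on' with
  | add P Q hP hQ => simp only [map_add, LinearMap.add_apply, hP, hQ]
  | monomial s a =>
    rw [pderiv_monomial, fischerPairing_monomial, fischerPairing_monomial]
    by_cases hs : s i = 0
    · rw [coeff_X_mul', if_neg (by simpa using hs), hs]
      simp
    · obtain ⟨d, rfl⟩ : ∃ d, s = single i 1 + d :=
        ⟨s - single i 1,
          (add_tsub_cancel_of_le (by simpa [Nat.one_le_iff_ne_zero] using hs)).symm⟩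
      rw [coeff_X_mul, add_tsub_cancel_left, add_comm, prod_factorial_add_single]
      simp only [Finsupp.coe_add, Pi.add_apply, single_eq_same, cast_add, cast_one]
      ring

lemma fischerPairing_map_conj_ne_zero {P : MvPolynomial σ ℂ} (hP : P ≠ 0) :
    fischerPairing P (map (starRingEnd ℂ) P) ≠ 0 := by
  have hpos : 0 < ∑ d ∈ P.support, Complex.normSq (coeff d P) * d.prod fun _ k => (k ! : ℝ) :=
    Finset.sum_pos (fun d hd => mul_pos
      (Complex.normSq_pos.mpr (MvPolynomial.mem_support_iff.mp hd))
      (Finset.prod_pos fun _ _ => by positivity)) (support_nonempty.mpr hP)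
  rw [fischerPairing_apply]
  simp_rw [coeff_map, Complex.mul_conj]
  simpa [Finsupp.prod] using Complex.ofReal_ne_zero.mpr hpos.ne'

end FischerPairing

section Bihomogeneous

variable (K σ τ : Type*) [Field K]

noncomputable def bihomogeneousSubmodule (b c : ℕ) : Submodule K (MvPolynomial (σ ⊕ τ) K) :=
  weightedHomogeneousSubmodule K (Sum.elim (fun _ => 1) fun _ => 0) b ⊓
    weightedHomogeneousSubmodule K (Sum.elim (fun _ => 0) fun _ => 1) c

def bidegreeSet (b c : ℕ) : Set (σ ⊕ τ →₀ ℕ) :=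
  {d | weight (Sum.elim (fun _ => 1) fun _ => 0) d = b ∧
    weight (Sum.elim (fun _ => 0) fun _ => 1) d = c}

variable {K σ τ}

lemma bihomogeneousSubmodule_eq_restrictSupport (b c : ℕ) :
    bihomogeneousSubmodule K σ τ b c = restrictSupport K (bidegreeSet σ τ b c) := by
  ext P
  simp only [bihomogeneousSubmodule, Submodule.mem_inf,
    weightedHomogeneousSubmodule_eq_finsupp_supported]
  exact Set.subset_inter_iff.symm

variable [Fintype σ] [Fintype τ]

lemma weight_sumElim_one_zero (d : σ ⊕ τ →₀ ℕ) :
    weight (Sum.elim (fun _ => 1) fun _ => 0) d = (sumFinsuppEquivProdFinsupp d).1.degree := by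
  simp [weight_apply, Finsupp.sum_fintype, Fintype.sum_sum_type, degree_eq_sum]

lemma weight_sumElim_zero_one (d : σ ⊕ τ →₀ ℕ) :
    weight (Sum.elim (fun _ => 0) fun _ => 1) d = (sumFinsuppEquivProdFinsupp d).2.degree := by
  simp [weight_apply, Finsupp.sum_fintype, Fintype.sum_sum_type, degree_eq_sum]

noncomputable def bidegreeSetEquiv [DecidableEq σ] [DecidableEq τ] (b c : ℕ) :
    bidegreeSet σ τ b c ≃ Sym σ b × Sym τ c :=
  (sumFinsuppEquivProdFinsupp.subtypeEquiv fun d => by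
    simp [bidegreeSet, weight_sumElim_one_zero, weight_sumElim_zero_one, degree_apply,
      Finsupp.sum]).trans
    (Equiv.subtypeProdEquivProd.trans
      ((Sym.equivNatSum σ b).symm.prodCongr (Sym.equivNatSum τ c).symm))

instance (b c : ℕ) : FiniteDimensional K (bihomogeneousSubmodule K σ τ b c) := by
  classical
  have : Finite (bidegreeSet σ τ b c) := .of_equiv _ (bidegreeSetEquiv b c).symm
  rw [bihomogeneousSubmodule_eq_restrictSupport]
  exact .of_basis (basisRestrictSupport K _)

lemma finrank_bihomogeneousSubmodule (b c : ℕ) :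
    Module.finrank K (bihomogeneousSubmodule K σ τ b c) =
      multichoose (Fintype.card σ) b * multichoose (Fintype.card τ) c := by
  classical
  rw [bihomogeneousSubmodule_eq_restrictSupport,
    Module.finrank_eq_nat_card_basis (basisRestrictSupport K _),
    Nat.card_congr (bidegreeSetEquiv b c), Nat.card_prod, Nat.card_eq_fintype_card,
    Nat.card_eq_fintype_card, Sym.card_sym_eq_multichoose, Sym.card_sym_eq_multichoose]

end Bihomogeneous

lemma Submodule.finrank_inf_ker_add_finrank_map {K M N : Type*} [DivisionRing K]
    [AddCommGroup M] [Module K M] [AddCommGroup N] [Module K N] (f : M →ₗ[K] N)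
    (V : Submodule K M) [FiniteDimensional K V] :
    Module.finrank K ↥(V ⊓ LinearMap.ker f) + Module.finrank K (V.map f) =
      Module.finrank K V := by
  rw [← (f.domRestrict V).finrank_range_add_finrank_ker, LinearMap.range_domRestrict,
    LinearMap.ker_domRestrict, add_comm,
    ← (comapSubtypeEquivOfLe (inf_le_left : V ⊓ LinearMap.ker f ≤ V)).finrank_eq, comap_inf,
    comap_subtype_self, top_inf_eq]

lemma MvPolynomial.pderiv_eq_zero_of_isWeightedHomogeneous_zero {σ R : Type*} [CommSemiring R]
    {w : σ → ℕ} {P : MvPolynomial σ R} (hP : P.IsWeightedHomogeneous w 0) {i : σ}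
    (hi : w i ≠ 0) : pderiv i P = 0 := by
  ext d
  rw [coeff_pderiv, hP.coeff_eq_zero, zero_mul, coeff_zero]
  simp [weight_single, hi]

section ComplexLaplacian

variable {n : ℕ}

local notation "V" => bihomogeneousSubmodule ℂ (Fin n) (Fin n)

noncomputable def normSqPoly (n : ℕ) : MvPolynomial (Fin n ⊕ Fin n) ℂ :=
  ∑ j, X (Sum.inl j) * X (Sum.inr j)

lemma complexLaplacian_apply (P : MvPolynomial (Fin n ⊕ Fin n) ℂ) :
    complexLaplacian n P = ∑ j, pderiv (Sum.inl j) (pderiv (Sum.inr j) P) := by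
  simp [complexLaplacian]

lemma fischerPairing_complexLaplacian (P R : MvPolynomial (Fin n ⊕ Fin n) ℂ) :
    fischerPairing (complexLaplacian n P) R = fischerPairing P (normSqPoly n * R) := by
  simp only [complexLaplacian_apply, map_sum, LinearMap.coe_sum, Finset.sum_apply,
    fischerPairing_pderiv, normSqPoly, Finset.sum_mul, mul_assoc, mul_left_comm (X (Sum.inl _))]

lemma normSqPoly_ne_zero (hn : n ≠ 0) : normSqPoly n ≠ 0 := by
  intro h
  have := congrArg (eval fun _ => 1) h
  simp only [normSqPoly, map_sum, map_mul, eval_X, mul_one, Finset.sum_const, Finset.card_univ,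
    Fintype.card_fin, nsmul_eq_mul, map_zero, cast_eq_zero] at this
  exact hn this

lemma map_conj_normSqPoly_mul (P : MvPolynomial (Fin n ⊕ Fin n) ℂ) :
    map (starRingEnd ℂ) (normSqPoly n * P) = normSqPoly n * map (starRingEnd ℂ) P := by
  simp [normSqPoly]

lemma injective_complexLaplacian_comp_mulLeft (hn : n ≠ 0) :
    Function.Injective (complexLaplacian n ∘ₗ LinearMap.mulLeft ℂ (normSqPoly n)) := by
  rw [← LinearMap.ker_eq_bot, LinearMap.ker_eq_bot']
  intro P hP
  have hqP : normSqPoly n * P = 0 := by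
    by_contra hne
    apply fischerPairing_map_conj_ne_zero hne
    rw [map_conj_normSqPoly_mul, ← fischerPairing_complexLaplacian]
    rw [show complexLaplacian n (normSqPoly n * P) = 0 from hP, map_zero, LinearMap.zero_apply]
  exact (mul_eq_zero.mp hqP).resolve_left (normSqPoly_ne_zero hn)

lemma complexLaplacian_mem_bihomogeneousSubmodule {b c : ℕ}
    {P : MvPolynomial (Fin n ⊕ Fin n) ℂ} (hP : P ∈ V (b + 1) (c + 1)) :
    complexLaplacian n P ∈ V b c := by
  rw [complexLaplacian_apply]
  exact Submodule.sum_mem _ fun j _ =>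
    ⟨(hP.1.pderiv (add_zero _)).pderiv rfl, (hP.2.pderiv rfl).pderiv (add_zero _)⟩

lemma normSqPoly_mem_bihomogeneousSubmodule : normSqPoly n ∈ V 1 1 :=
  Submodule.sum_mem _ fun j _ =>
    ⟨(isWeightedHomogeneous_X ℂ _ (Sum.inl j)).mul (isWeightedHomogeneous_X ℂ _ (Sum.inr j)),
      (isWeightedHomogeneous_X ℂ _ (Sum.inl j)).mul (isWeightedHomogeneous_X ℂ _ (Sum.inr j))⟩

lemma normSqPoly_mul_mem_bihomogeneousSubmodule {b c : ℕ}
    {P : MvPolynomial (Fin n ⊕ Fin n) ℂ} (hP : P ∈ V b c) :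
    normSqPoly n * P ∈ V (b + 1) (c + 1) := by
  obtain ⟨hz, hw⟩ := normSqPoly_mem_bihomogeneousSubmodule (n := n)
  rw [add_comm b, add_comm c]
  exact ⟨hz.mul hP.1, hw.mul hP.2⟩

lemma map_complexLaplacian_bihomogeneousSubmodule (hn : n ≠ 0) (b c : ℕ) :
    (V (b + 1) (c + 1)).map (complexLaplacian n) = V b c := by
  refine le_antisymm (Submodule.map_le_iff_le_comap.mpr fun P hP =>
    complexLaplacian_mem_bihomogeneousSubmodule hP) fun P hP => ?_
  let T : V b c →ₗ[ℂ] V b c :=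
    (complexLaplacian n ∘ₗ LinearMap.mulLeft ℂ (normSqPoly n)).restrict fun Q hQ =>
      complexLaplacian_mem_bihomogeneousSubmodule (normSqPoly_mul_mem_bihomogeneousSubmodule hQ)
  have hT : Function.Surjective T := LinearMap.injective_iff_surjective.mp fun Q₁ Q₂ h =>
    Subtype.ext (injective_complexLaplacian_comp_mulLeft hn (congrArg Subtype.val h))
  obtain ⟨Q, hQ⟩ := hT ⟨P, hP⟩
  exact ⟨_, normSqPoly_mul_mem_bihomogeneousSubmodule Q.2, congrArg Subtype.val hQ⟩

lemma finrank_biharmonicSubmodule_succ_succ (hn : n ≠ 0) (b c : ℕ) :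
    Module.finrank ℂ (biharmonicSubmodule n (b + 1) (c + 1)) + multichoose n b * multichoose n c =
      multichoose n (b + 1) * multichoose n (c + 1) := by
  have := Submodule.finrank_inf_ker_add_finrank_map (complexLaplacian n) (V (b + 1) (c + 1))
  rwa [map_complexLaplacian_bihomogeneousSubmodule hn, finrank_bihomogeneousSubmodule,
    finrank_bihomogeneousSubmodule, Fintype.card_fin] at this

lemma biharmonicSubmodule_zero_left (c : ℕ) : biharmonicSubmodule n 0 c = V 0 c :=
  inf_eq_left.mpr fun P hP => by
    rw [LinearMap.mem_ker, complexLaplacian_apply]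
    exact Finset.sum_eq_zero fun j _ =>
      pderiv_eq_zero_of_isWeightedHomogeneous_zero (hP.1.pderiv (add_zero _)) one_ne_zero

lemma biharmonicSubmodule_zero_right (b : ℕ) : biharmonicSubmodule n b 0 = V b 0 :=
  inf_eq_left.mpr fun P hP => by
    rw [LinearMap.mem_ker, complexLaplacian_apply]
    exact Finset.sum_eq_zero fun j _ => by
      rw [pderiv_eq_zero_of_isWeightedHomogeneous_zero hP.2 one_ne_zero, map_zero]

end ComplexLaplacian

lemma prod_Icc_add_eq_ascFactorial (k m : ℕ) :
    ∏ j ∈ Finset.Icc 1 m, (k + j) = (k + 1).ascFactorial m := by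
  induction m with
  | zero => rfl
  | succ m ih =>
    rw [Finset.prod_Icc_succ_top (by omega), ih, Nat.ascFactorial_succ]
    ring

lemma factorial_mul_multichoose (m k : ℕ) :
    (m + 1)! * multichoose (m + 2) k = (k + 1).ascFactorial (m + 1) := by
  rw [Nat.ascFactorial_eq_factorial_mul_choose, Nat.multichoose_eq,
    show m + 2 + k - 1 = k + (m + 1) by omega, Nat.choose_symm_add]

lemma factorial_sq_mul_finrank_biharmonicSubmodule (m b c : ℕ) :
    (m + 1)! ^ 2 * Module.finrank ℂ (biharmonicSubmodule (m + 2) b c) =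
      (m + 1) * ((b + c + m + 1) * (b + 1).ascFactorial m * (c + 1).ascFactorial m) := by
  have hM (k : ℕ) : (m + 1)! * multichoose (m + 2) k = (k + m + 1) * (k + 1).ascFactorial m := by
    rw [factorial_mul_multichoose, Nat.ascFactorial_succ]
    ring
  have hM' (k : ℕ) : (m + 1)! * multichoose (m + 2) k = (k + 1) * (k + 2).ascFactorial m := by
    rw [hM]
    linear_combination (Nat.succ_ascFactorial (k + 1) m).symm
  rcases b with _ | b
  · rw [biharmonicSubmodule_zero_left, finrank_bihomogeneousSubmodule, Fintype.card_fin,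
      multichoose_zero_right, zero_add, zero_add, Nat.one_ascFactorial]
    linear_combination (m + 1)! * hM c + (c + m + 1) * (c + 1).ascFactorial m * factorial_succ m
  rcases c with _ | c
  · rw [biharmonicSubmodule_zero_right, finrank_bihomogeneousSubmodule, Fintype.card_fin,
      multichoose_zero_right, add_zero, zero_add, Nat.one_ascFactorial]
    linear_combination (m + 1)! * hM (b + 1) +
      (b + 1 + m + 1) * (b + 2).ascFactorial m * factorial_succ m
  · have h := finrank_biharmonicSubmodule_succ_succ (n := m + 2) (by omega) b c
    -- `(m + 1)! ^ 2` times `h`, rewritten by `hM'` in degrees `b, c` and by `hM` in `b + 1, c + 1`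
    linear_combination (m + 1)! ^ 2 * h - (m + 1)! * multichoose (m + 2) c * hM' b -
      (b + 1) * (b + 2).ascFactorial m * hM' c +
      (m + 1)! * multichoose (m + 2) (c + 1) * hM (b + 1) +
      (b + 1 + m + 1) * (b + 2).ascFactorial m * hM (c + 1)

/-- Dimension formula for the space `H_{b,c}` of `□`-harmonic bihomogeneous polynomials of
bidegree `(b, c)` in `n ≥ 2` complex variables:
`(n−1)·((n−2)!)² · dim H_{b,c} = (b+c+n−1) · ∏_{j=1}^{n−2}(b+j) · ∏_{j=1}^{n−2}(c+j)`. -/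
theorem finrank_biharmonicSubmodule (n b c : ℕ) (hn : 2 ≤ n) :
    (n - 1) * (n - 2).factorial ^ 2 * Module.finrank ℂ (biharmonicSubmodule n b c) =
      (b + c + n - 1) * (∏ j ∈ Finset.Icc 1 (n - 2), (b + j)) *
        ∏ j ∈ Finset.Icc 1 (n - 2), (c + j) := by
  obtain ⟨m, rfl⟩ : ∃ m, n = m + 2 := ⟨n - 2, by omega⟩
  rw [prod_Icc_add_eq_ascFactorial, prod_Icc_add_eq_ascFactorial,
    show m + 2 - 1 = m + 1 by omega, show m + 2 - 2 = m by omega,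
    show b + c + (m + 2) - 1 = b + c + m + 1 by omega]
  apply Nat.eq_of_mul_eq_mul_left (by omega : 0 < m + 1)
  rw [← mul_assoc, ← mul_assoc, ← factorial_sq_mul_finrank_biharmonicSubmodule,
    Nat.factorial_succ]
  ring
end
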